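/- arXiv:0811.4275 — 10 statements merged into one kernel-verified Lean document; each statement's English description precedes it below -/
import Mathlib

section
/- Let M be a subset of ℝ^m in which every point has the same Euclidean norm r, and let y_1, …, y_N ∈ M (N ≥ 2). Suppose that for every k, the point y_k globally maximizes the linear function c ↦ ⟨c, Σ_{j≠k} y_j⟩ over c ∈ M (i.e., each agent is a consensus point for the equally-weighted complete graph). Then y_1 = y_2 = … = y_N. -/
open scoped RealInnerProductSpace

/-- Paper's Proposition 3: if every agent is a consensus point for the
equally-weighted complete graph on a set `M ⊆ ℝ^m` of constant norm `r`, then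
all agents coincide (synchronization). -/
theorem stmt0 {m N : ℕ} (hN : 2 ≤ N)
    (M : Set (EuclideanSpace ℝ (Fin m))) (r : ℝ) (hM : ∀ z ∈ M, ‖z‖ = r)
    (y : Fin N → EuclideanSpace ℝ (Fin m)) (hy : ∀ k, y k ∈ M)
    (hcons : ∀ k, ∀ c ∈ M,
      ⟪c, ∑ j ∈ Finset.univ.erase k, y j⟫ ≤ ⟪y k, ∑ j ∈ Finset.univ.erase k, y j⟫) :
    ∀ j k, y j = y k := by
  intro j k
  have hsum : ∀ i : Fin N, ∑ l ∈ Finset.univ.erase i, y l = (∑ l, y l) - y i := by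
    intro i
    rw [Finset.sum_erase_eq_sub (Finset.mem_univ i)]
  have h1 := hcons k (y j) (hy j)
  have h2 := hcons j (y k) (hy k)
  rw [hsum k] at h1
  rw [hsum j] at h2
  have hnj : ‖y j‖ = r := hM _ (hy j)
  have hnk : ‖y k‖ = r := hM _ (hy k)
  have hjj : ⟪y j, y j⟫ = r ^ 2 := by
    rw [real_inner_self_eq_norm_sq, hnj]
  have hkk : ⟪y k, y k⟫ = r ^ 2 := by
    rw [real_inner_self_eq_norm_sq, hnk]
  simp only [inner_sub_right] at h1 h2
  -- adding h1 and h2 : -2⟪y j, y k⟫ ≤ -2 r^2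
  have hge : r ^ 2 ≤ ⟪y j, y k⟫ := by
    have hsym : ⟪y k, y j⟫ = ⟪y j, y k⟫ := real_inner_comm _ _
    nlinarith [h1, h2, hjj, hkk, hsym]
  have hdist : ‖y j - y k‖ ^ 2 ≤ 0 := by
    have := norm_sub_sq_real (y j) (y k)
    rw [hnj, hnk] at this
    nlinarith [this, hge]
  have hn0 : ‖y j - y k‖ = 0 := by nlinarith [norm_nonneg (y j - y k)]
  exact sub_eq_zero.mp (norm_eq_zero.mp hn0)
end

section
/- Let M be a subset of ℝ^m in which every point has the same Euclidean norm r, and let y_1, …, y_N ∈ M. Suppose the configuration is balanced, i.e., the linear function c ↦ ⟨c, Σ_{j=1}^N y_j⟩ is constant over c ∈ M. Then for every k, the point y_k globally minimizes the linear function c ↦ ⟨c, Σ_{j≠k} y_j⟩ over c ∈ M; that is, every balanced configuration is an anti-consensus configuration for the equally-weighted complete graph. -/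
open scoped RealInnerProductSpace

/-- Paper's Proposition 4: every balanced configuration (the linear function
`c ↦ ⟪c, Σ_j y_j⟫` is constant on `M`) is an anti-consensus configuration for
the equally-weighted complete graph. -/
theorem stmt1 {m N : ℕ}
    (M : Set (EuclideanSpace ℝ (Fin m))) (r : ℝ) (hM : ∀ z ∈ M, ‖z‖ = r)
    (y : Fin N → EuclideanSpace ℝ (Fin m)) (hy : ∀ k, y k ∈ M)
    (hbal : ∀ c ∈ M, ∀ c' ∈ M, ⟪c, ∑ j, y j⟫ = ⟪c', ∑ j, y j⟫) :
    ∀ k, ∀ c ∈ M,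
      ⟪y k, ∑ j ∈ Finset.univ.erase k, y j⟫ ≤ ⟪c, ∑ j ∈ Finset.univ.erase k, y j⟫ := by
  intro k c hc
  have hsum : ∀ z : EuclideanSpace ℝ (Fin m),
      ⟪z, ∑ j ∈ Finset.univ.erase k, y j⟫ = ⟪z, ∑ j, y j⟫ - ⟪z, y k⟫ := by
    intro z
    rw [← Finset.sum_erase_add _ _ (Finset.mem_univ k), inner_add_right]
    ring
  rw [hsum, hsum, hbal (y k) (hy k) c hc]
  have h1 : ⟪c, y k⟫ ≤ ‖c‖ * ‖y k‖ := real_inner_le_norm c (y k)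
  have h2 : ⟪y k, y k⟫ = ‖y k‖ * ‖y k‖ := real_inner_self_eq_norm_mul_norm (y k)
  rw [hM c hc, hM (y k) (hy k)] at h1
  rw [hM (y k) (hy k)] at h2
  linarith
end

section
/- Let M be a nonempty subset of ℝ^m in which every point has the same Euclidean norm r > 0, let a_{jk} ≥ 0 for j, k ∈ {1,…,N} be weights whose associated graph is weakly connected (for any two indices j, k there is a finite sequence j = v_0, v_1, …, v_s = k with a_{v_i v_{i+1}} + a_{v_{i+1} v_i} > 0 for each i), and define P_L(y) = (1/(2N²)) Σ_{k=1}^N Σ_{j=1}^N a_{jk} ⟨y_j, y_k⟩ for y = (y_1,…,y_N) ∈ M^N. Then for every y ∈ M^N one has P_L(y) ≤ (r²/(2N²)) Σ_{j,k} a_{jk}, with equality if and only if y_1 = y_2 = … = y_N. In particular, synchronization is the unique global maximum of P_L over M^N. -/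
open scoped RealInnerProductSpace

/-- Paper's Proposition 5: for a weakly connected nonnegative weight graph on a
set `M ⊆ ℝ^m` of constant norm `r > 0`, the cost `P_L` is bounded above by
`(r²/(2N²)) Σ_{j,k} a_{jk}`, with equality exactly at synchronization, so
synchronization is the unique global maximum of `P_L`. -/
theorem stmt2 {m N : ℕ}
    (M : Set (EuclideanSpace ℝ (Fin m))) (hMne : M.Nonempty)
    (r : ℝ) (hr : 0 < r) (hM : ∀ z ∈ M, ‖z‖ = r)
    (a : Fin N → Fin N → ℝ) (ha : ∀ j k, 0 ≤ a j k)
    (hconn : ∀ j k : Fin N, Relation.ReflTransGen (fun u v => 0 < a u v + a v u) j k)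
    (y : Fin N → EuclideanSpace ℝ (Fin m)) (hy : ∀ k, y k ∈ M) :
    (1 / (2 * (N : ℝ) ^ 2)) * ∑ k, ∑ j, a j k * ⟪y j, y k⟫
        ≤ (r ^ 2 / (2 * (N : ℝ) ^ 2)) * ∑ k, ∑ j, a j k
      ∧ ((1 / (2 * (N : ℝ) ^ 2)) * ∑ k, ∑ j, a j k * ⟪y j, y k⟫
            = (r ^ 2 / (2 * (N : ℝ) ^ 2)) * ∑ k, ∑ j, a j k
          ↔ ∀ j k, y j = y k) := by
  have hnorm : ∀ k, ‖y k‖ = r := fun k => hM _ (hy k)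
  have hCS : ∀ j k, ⟪y j, y k⟫ ≤ r ^ 2 := by
    intro j k
    calc ⟪y j, y k⟫ ≤ ‖y j‖ * ‖y k‖ := real_inner_le_norm _ _
    _ = r ^ 2 := by rw [hnorm, hnorm, sq]
  have heqpt : ∀ j k, ⟪y j, y k⟫ = r ^ 2 → y j = y k := by
    intro j k h
    have hsq : ‖y j - y k‖ ^ 2 = 0 := by
      rw [norm_sub_sq_real, hnorm, hnorm, h]; ring
    have h0 : y j - y k = 0 :=
      norm_eq_zero.mp (pow_eq_zero_iff (n := 2) (by norm_num) |>.mp hsq)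
    exact sub_eq_zero.mp h0
  rcases Nat.eq_zero_or_pos N with hN | hN
  · subst hN
    refine ⟨by simp, ?_⟩
    constructor
    · intro _ j; exact j.elim0
    · intro _; simp
  have hc : (0:ℝ) < 1 / (2 * (N : ℝ) ^ 2) := by positivity
  set A := ∑ k, ∑ j, a j k * ⟪y j, y k⟫ with hA
  set B := ∑ k : Fin N, ∑ j : Fin N, a j k * r ^ 2 with hB
  have hRHS : (r ^ 2 / (2 * (N : ℝ) ^ 2)) * ∑ k, ∑ j, a j k
      = (1 / (2 * (N : ℝ) ^ 2)) * B := by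
    rw [hB]
    rw [show (∑ k : Fin N, ∑ j : Fin N, a j k * r ^ 2)
        = (∑ k : Fin N, ∑ j : Fin N, a j k) * r ^ 2 by
      rw [Finset.sum_mul]
      exact Finset.sum_congr rfl fun k _ => (Finset.sum_mul _ _ _).symm]
    ring
  have hle : A ≤ B :=
    Finset.sum_le_sum fun k _ =>
      Finset.sum_le_sum fun j _ => mul_le_mul_of_nonneg_left (hCS j k) (ha j k)
  constructor
  · rw [hRHS]
    exact mul_le_mul_of_nonneg_left hle (le_of_lt hc)
  · rw [hRHS]
    have hcancel : (1 / (2 * (N : ℝ) ^ 2)) * A = (1 / (2 * (N : ℝ) ^ 2)) * B ↔ A = B :=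
      ⟨fun h => mul_left_cancel₀ (ne_of_gt hc) h, fun h => by rw [h]⟩
    rw [hcancel]
    constructor
    · intro hAB
      have hterm : ∀ k ∈ Finset.univ, (∑ j, a j k * ⟪y j, y k⟫) = ∑ j : Fin N, a j k * r ^ 2 := by
        apply (Finset.sum_eq_sum_iff_of_le ?_).mp hAB
        intro k _
        exact Finset.sum_le_sum fun j _ => mul_le_mul_of_nonneg_left (hCS j k) (ha j k)
      have hterm2 : ∀ j k, a j k * ⟪y j, y k⟫ = a j k * r ^ 2 := by
        intro j k
        have h2 := (Finset.sum_eq_sum_iff_of_le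
          (fun j (_ : j ∈ Finset.univ) =>
            mul_le_mul_of_nonneg_left (hCS j k) (ha j k))).mp (hterm k (Finset.mem_univ k))
        exact h2 j (Finset.mem_univ j)
      have hpos : ∀ u v, 0 < a u v → y u = y v := fun u v huv =>
        heqpt u v (mul_left_cancel₀ (ne_of_gt huv) (hterm2 u v))
      have hstep : ∀ u v, 0 < a u v + a v u → y u = y v := by
        intro u v huv
        rcases lt_or_eq_of_le (ha u v) with h | h
        · exact hpos u v h
        · have h3 : 0 < a v u := by linarith
          exact (hpos v u h3).symm
      intro j k
      induction hconn j k with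
      | refl => rfl
      | tail _ h ih => exact ih.trans (hstep _ _ h)
    · intro hsync
      have hip : ∀ j k, ⟪y j, y k⟫ = r ^ 2 := by
        intro j k
        rw [hsync j k, real_inner_self_eq_norm_sq, hnorm]
      rw [hA, hB]
      exact Finset.sum_congr rfl fun k _ => Finset.sum_congr rfl fun j _ => by rw [hip j k]
end

section
/- Let M be a nonempty subset of ℝ^m with the property that for every b ∈ ℝ^m, every local maximum of the linear function c ↦ ⟨c, b⟩ on M is a global maximum on M. Let A = [a_{jk}] be a symmetric N×N matrix with nonnegative entries, and define P_L(y) = (1/(2N²)) Σ_{k=1}^N Σ_{j=1}^N a_{jk} ⟨y_j, y_k⟩ on M^N. If y* = (y_1*,…,y_N*) ∈ M^N is a local maximizer of P_L on M^N (with respect to the topology M^N inherits as a subset of (ℝ^m)^N), then y* is a consensus configuration: for every k, y_k* globally maximizes c ↦ ⟨c, Σ_j a_{jk} y_j*⟩ over c ∈ M. -/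
open scoped RealInnerProductSpace

/-!
Moving only agent `k` from `y k` to `c` changes `P_L` by a positive multiple of
`2⟪c - y k, b⟫ + a k k ‖c - y k‖²`, where `b = ∑ j, a j k • y j`. Since `a k k ≥ 0`, a local
maximizer `y` of `P_L` makes `c ↦ ⟪c, b⟫` locally maximal on `M` at `y k`, and Assumption 2
upgrades this to a global maximum.
-/

theorem Function.update_eq_add_single_sub {ι M : Type*} [DecidableEq ι] [AddCommGroup M]
    (y : ι → M) (k : ι) (c : M) : Function.update y k c = y + Pi.single k (c - y k) := by
  ext1 j
  rcases eq_or_ne j k with rfl | h <;> simp [*]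

theorem IsLocalMaxOn.of_const_mul {X : Type*} [TopologicalSpace X] {f : X → ℝ} {s : Set X}
    {x : X} {r : ℝ} (hr : 0 < r) (h : IsLocalMaxOn (fun z => r * f z) s x) :
    IsLocalMaxOn f s x :=
  Filter.Eventually.mono h fun _ hz => le_of_mul_le_mul_left hz hr

theorem IsLocalMaxOn.comp_update {ι X β : Type*} [DecidableEq ι] [TopologicalSpace X]
    [Preorder β] {f : (ι → X) → β} {M : Set X} {y : ι → X} (hy : ∀ i, y i ∈ M)
    (hmax : IsLocalMaxOn f {z | ∀ i, z i ∈ M} y) (k : ι) :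
    IsLocalMaxOn (fun c => f (Function.update y k c)) M (y k) := by
  rw [← Function.update_eq_self k y] at hmax
  exact hmax.comp_continuousOn
    (fun c hc => (Function.forall_update_iff y fun _ z => z ∈ M).2 ⟨hc, fun i _ => hy i⟩)
    (continuous_const.update k continuous_id (f := fun _ => y)).continuousOn (hy k)

section WeightedGram

variable {ι E : Type*} [Fintype ι] [DecidableEq ι] [NormedAddCommGroup E] [InnerProductSpace ℝ E]

/-- `∑ k, ∑ j, a j k ⟪y j, y k⟫`, i.e. `P_L` up to the factor `1 / (2 N²)`. -/
def weightedGram (a : ι → ι → ℝ) (y : ι → E) : ℝ := ∑ k, ∑ j, a j k * ⟪y j, y k⟫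

theorem weightedGram_update {a : ι → ι → ℝ} (hsym : ∀ j k, a j k = a k j) (y : ι → E) (k : ι)
    (c : E) :
    weightedGram a (Function.update y k c) =
      weightedGram a y + 2 * ⟪c - y k, ∑ j, a j k • y j⟫ + a k k * ‖c - y k‖ ^ 2 := by
  rw [Function.update_eq_add_single_sub]
  simp only [weightedGram, Pi.add_apply, inner_add_left, inner_add_right, mul_add,
    Finset.sum_add_distrib]
  simp [Pi.single_apply, apply_ite, inner_sum, real_inner_smul_left, hsym _ k, real_inner_comm]
  ring

theorem IsLocalMaxOn.inner_weightedGram_update {a : ι → ι → ℝ} (hsym : ∀ j k, a j k = a k j)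
    {k : ι} (hkk : 0 ≤ a k k) {M : Set E} {y : ι → E} (hy : ∀ i, y i ∈ M)
    (hmax : IsLocalMaxOn (weightedGram a) {z | ∀ i, z i ∈ M} y) :
    IsLocalMaxOn (fun c => ⟪c, ∑ j, a j k • y j⟫) M (y k) := by
  filter_upwards [hmax.comp_update hy k] with c hc
  rw [Function.update_eq_self, weightedGram_update hsym, inner_sub_left] at hc
  nlinarith [sq_nonneg ‖c - y k‖]

end WeightedGram

theorem stmt3_general {m N : ℕ}
    (M : Set (EuclideanSpace ℝ (Fin m)))
    (hass2 : ∀ b : EuclideanSpace ℝ (Fin m), ∀ c₀ ∈ M,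
      IsLocalMaxOn (fun c => ⟪c, b⟫) M c₀ → ∀ c ∈ M, ⟪c, b⟫ ≤ ⟪c₀, b⟫)
    (a : Fin N → Fin N → ℝ) (hsym : ∀ j k, a j k = a k j) (ha : ∀ j k, 0 ≤ a j k)
    (ystar : Fin N → EuclideanSpace ℝ (Fin m)) (hy : ∀ k, ystar k ∈ M)
    (hmax : IsLocalMaxOn
      (fun y : Fin N → EuclideanSpace ℝ (Fin m) =>
        (1 / (2 * (N : ℝ) ^ 2)) * ∑ k, ∑ j, a j k * ⟪y j, y k⟫)
      {y | ∀ k, y k ∈ M} ystar) :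
    ∀ k, ∀ c ∈ M,
      ⟪c, ∑ j, a j k • ystar j⟫ ≤ ⟪ystar k, ∑ j, a j k • ystar j⟫ := by
  intro k
  have hN : (0 : ℝ) < N := by exact_mod_cast k.pos
  have hgram : IsLocalMaxOn (weightedGram a) {y | ∀ k, y k ∈ M} ystar :=
    hmax.of_const_mul (by positivity)
  exact hass2 _ _ (hy k) (hgram.inner_weightedGram_update hsym (ha k k) hy)

/-- Paper's Proposition 6 (maximum case): on a set `M ⊆ ℝ^m` satisfying
Assumption 2 (local maxima of linear functions on `M` are global), any local
maximizer of `P_L` on `M^N` (for a symmetric nonnegative weight matrix) is a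
consensus configuration. -/
theorem stmt3 {m N : ℕ}
    (M : Set (EuclideanSpace ℝ (Fin m))) (hMne : M.Nonempty)
    (hass2 : ∀ b : EuclideanSpace ℝ (Fin m), ∀ c₀ ∈ M,
      IsLocalMaxOn (fun c => ⟪c, b⟫) M c₀ → ∀ c ∈ M, ⟪c, b⟫ ≤ ⟪c₀, b⟫)
    (a : Fin N → Fin N → ℝ) (hsym : ∀ j k, a j k = a k j) (ha : ∀ j k, 0 ≤ a j k)
    (ystar : Fin N → EuclideanSpace ℝ (Fin m)) (hy : ∀ k, ystar k ∈ M)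
    (hmax : IsLocalMaxOn
      (fun y : Fin N → EuclideanSpace ℝ (Fin m) =>
        (1 / (2 * (N : ℝ) ^ 2)) * ∑ k, ∑ j, a j k * ⟪y j, y k⟫)
      {y | ∀ k, y k ∈ M} ystar) :
    ∀ k, ∀ c ∈ M,
      ⟪c, ∑ j, a j k • ystar j⟫ ≤ ⟪ystar k, ∑ j, a j k • ystar j⟫ :=
  stmt3_general M hass2 a hsym ha ystar hy hmax
end

section
/- For every real n×n matrix B, every local maximum of the function Q ↦ trace(Qᵀ B) on SO(n) is a global maximum: if Q₀ ∈ SO(n) is a local maximizer of Q ↦ trace(Qᵀ B) on SO(n) (with respect to the topology SO(n) inherits as a subset of the n×n real matrices), then trace(Q₀ᵀ B) ≥ trace(Qᵀ B) for all Q ∈ SO(n). -/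
/-!
Write `M = Q₀ᵀ B`, so that `trace (Qᵀ B) = trace ((Q₀ᵀ Q)ᵀ M)`. Along the curves
`t ↦ Q₀ R G(t) Rᵀ` in `SO(n)`, where `G(t)` is a plane rotation and `R` is orthogonal, local
maximality yields a first- and a second-order condition: `M` is symmetric, and its eigenvalues
satisfy `μᵢ + μⱼ ≥ 0` for `i ≠ j`. So at most one eigenvalue `μⱼ` is negative, and `-μⱼ` is
bounded by all the others. Writing `P` for `Qᵀ Q₀` in an eigenbasis of `M`, so that
`trace (Qᵀ B) = ∑ Pᵢᵢ μᵢ`, the claim becomes `∑ (1 - Pᵢᵢ) μᵢ ≥ 0`. For `μⱼ < 0` this reduces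
to `trace (D P) ≤ n - 2`, where `D` flips the sign of the `j`-th coordinate. That bound holds for
every orthogonal `S` of determinant `-1`: such an `S` has an eigenvector `v` with `S v = -v`,
and composing `S` with the Householder reflection in `v` gives an orthogonal matrix, of trace
at most `n`, whose trace is `trace S + 2`.
-/

namespace Matrix

variable {ι : Type*} [DecidableEq ι]

noncomputable def givens (i j : ι) (t : ℝ) : Matrix ι ι ℝ :=
  1 + (Real.cos t - 1) • (single i i 1 + single j j 1) + Real.sin t • (single j i 1 - single i j 1)

lemma continuous_givens (i j : ι) : Continuous (givens i j) := by
  unfold givens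
  fun_prop

lemma givens_zero (i j : ι) : givens i j 0 = 1 := by
  simp [givens]

lemma transpose_givens (i j : ι) (t : ℝ) : (givens i j t)ᵀ = givens i j (-t) := by
  simp only [givens, Real.cos_neg, Real.sin_neg, transpose_add, transpose_smul, transpose_one,
    transpose_sub, transpose_single]
  module

variable [Fintype ι]

lemma transpose_mul_self_mul {X Y : Matrix ι ι ℝ} (hX : Xᵀ * X = 1) (hY : Yᵀ * Y = 1) :
    (X * Y)ᵀ * (X * Y) = 1 := by
  rw [transpose_mul, Matrix.mul_assoc, ← Matrix.mul_assoc Xᵀ, hX, Matrix.one_mul, hY]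

lemma transpose_mul_self_conj_and_det {R G : Matrix ι ι ℝ} (hR : Rᵀ * R = 1)
    (hG : Gᵀ * G = 1 ∧ G.det = 1) :
    (R * G * Rᵀ)ᵀ * (R * G * Rᵀ) = 1 ∧ (R * G * Rᵀ).det = 1 := by
  have hR' : R * Rᵀ = 1 := mul_eq_one_comm.mp hR
  refine ⟨transpose_mul_self_mul (transpose_mul_self_mul hR hG.1) (by rwa [transpose_transpose]),
    ?_⟩
  have hdet : R.det * Rᵀ.det = 1 := by rw [← det_mul, hR', det_one]
  rw [det_mul, det_mul, hG.2]
  linear_combination hdet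

lemma trace_conj_mul_conj {R : Matrix ι ι ℝ} (hR : R * Rᵀ = 1) (X M : Matrix ι ι ℝ) :
    (Rᵀ * X * R * (Rᵀ * M * R)).trace = (X * M).trace := by
  rw [show Rᵀ * X * R * (Rᵀ * M * R) = Rᵀ * (X * M * R) by
      simp only [Matrix.mul_assoc, ← Matrix.mul_assoc R Rᵀ, hR, Matrix.one_mul],
    trace_mul_comm, Matrix.mul_assoc, hR, Matrix.mul_one]

lemma transpose_mul_self_transpose_mul_and_det {Q Q₀ : Matrix ι ι ℝ}
    (hQ : Qᵀ * Q = 1 ∧ Q.det = 1) (hQ₀ : Q₀ᵀ * Q₀ = 1 ∧ Q₀.det = 1) :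
    (Qᵀ * Q₀)ᵀ * (Qᵀ * Q₀) = 1 ∧ (Qᵀ * Q₀).det = 1 :=
  ⟨transpose_mul_self_mul (by rw [transpose_transpose, mul_eq_one_comm.mp hQ.1]) hQ₀.1,
    by rw [det_mul, det_transpose, hQ.2, hQ₀.2, one_mul]⟩

lemma diag_le_one_of_transpose_mul_self {P : Matrix ι ι ℝ} (hP : Pᵀ * P = 1) (i : ι) :
    P i i ≤ 1 := by
  have hcol : ∑ k, P k i ^ 2 = 1 := by
    simpa [mul_apply, sq] using congr_fun (congr_fun hP i) i
  have : P i i ^ 2 ≤ 1 :=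
    hcol ▸ Finset.single_le_sum (fun k _ => sq_nonneg (P k i)) (Finset.mem_univ i)
  nlinarith

lemma trace_le_card_of_transpose_mul_self {P : Matrix ι ι ℝ} (hP : Pᵀ * P = 1) :
    P.trace ≤ Fintype.card ι := by
  calc P.trace ≤ ∑ _i : ι, (1 : ℝ) :=
        Finset.sum_le_sum fun i _ => diag_le_one_of_transpose_mul_self hP i
    _ = Fintype.card ι := by simp

lemma givens_mul_givens {i j : ι} (hij : i ≠ j) (s t : ℝ) :
    givens i j s * givens i j t = givens i j (s + t) := by
  simp only [givens]
  set P : Matrix ι ι ℝ := single i i 1 + single j j 1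
  set K : Matrix ι ι ℝ := single j i 1 - single i j 1
  have hPP : P * P = P := by
    simp [P, Matrix.add_mul, Matrix.mul_add, single_mul_single_of_ne, hij, hij.symm]
  have hKK : K * K = -P := by
    simp only [P, K, Matrix.mul_sub, Matrix.sub_mul, single_mul_single_of_ne, ne_eq, hij,
      hij.symm, not_false_eq_true, single_mul_single_same, mul_one, zero_sub, sub_zero,
      neg_add_rev]
    abel
  have hPK : P * K = K := by
    simp [P, K, Matrix.add_mul, Matrix.mul_sub, single_mul_single_of_ne, hij, hij.symm]
  have hKP : K * P = K := by
    simp only [P, K, Matrix.mul_add, Matrix.sub_mul, single_mul_single_of_ne, ne_eq, hij,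
      hij.symm, not_false_eq_true, single_mul_single_same, mul_one, zero_sub, sub_zero]
    abel
  -- On the `(i, j)`-plane `P` acts as the identity and `K` as the rotation by `π / 2`.
  have hmul (a b c d : ℝ) : (1 + a • P + b • K) * (1 + c • P + d • K)
      = 1 + (a + c + a * c - b * d) • P + (b + d + a * d + b * c) • K := by
    simp only [Matrix.add_mul, Matrix.mul_add, Matrix.one_mul, Matrix.mul_one, Matrix.smul_mul,
      Matrix.mul_smul, hPP, hKK, hPK, hKP, smul_neg]
    module
  rw [hmul, Real.cos_add, Real.sin_add]
  module

lemma givens_transpose_mul_self {i j : ι} (hij : i ≠ j) (t : ℝ) :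
    (givens i j t)ᵀ * givens i j t = 1 := by
  rw [transpose_givens, givens_mul_givens hij, neg_add_cancel, givens_zero]

lemma det_givens {i j : ι} (hij : i ≠ j) (t : ℝ) : (givens i j t).det = 1 := by
  have hsq : (givens i j t).det ^ 2 = 1 := by
    simpa [det_mul, sq] using congrArg det (givens_transpose_mul_self hij t)
  have hnonneg : 0 ≤ (givens i j t).det := by
    rw [← add_halves t, ← givens_mul_givens hij, det_mul]
    exact mul_self_nonneg _
  nlinarith

lemma trace_transpose_givens_mul (i j : ι) (t : ℝ) (N : Matrix ι ι ℝ) :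
    ((givens i j t)ᵀ * N).trace
      = N.trace + (Real.cos t - 1) * (N i i + N j j) - Real.sin t * (N i j - N j i) := by
  rw [transpose_givens]
  simp only [givens, Real.cos_neg, Real.sin_neg, Matrix.add_mul, Matrix.smul_mul,
    Matrix.one_mul, Matrix.sub_mul, trace_add, trace_smul, trace_sub, trace_single_mul,
    smul_eq_mul]
  ring

lemma exists_mulVec_eq_neg_self {S : Matrix ι ι ℝ} (hS : Sᵀ * S = 1) (hdet : S.det = -1) :
    ∃ v ≠ 0, S *ᵥ v = -v := by
  have hsing : (1 + S).det = 0 := by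
    have h : S * (1 + S)ᵀ = 1 + S := by
      rw [transpose_add, transpose_one, Matrix.mul_add, Matrix.mul_one, mul_eq_one_comm.mp hS,
        add_comm]
    have := congrArg det h
    rw [det_mul, det_transpose, hdet] at this
    linarith
  obtain ⟨v, hv, hv0⟩ := exists_mulVec_eq_zero_iff.mpr hsing
  rw [add_mulVec, one_mulVec] at hv0
  exact ⟨v, hv, (neg_eq_of_add_eq_zero_right hv0).symm⟩

noncomputable def householder (v : ι → ℝ) : Matrix ι ι ℝ :=
  1 - (2 / (v ⬝ᵥ v)) • vecMulVec v v

lemma transpose_householder (v : ι → ℝ) : (householder v)ᵀ = householder v := by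
  simp [householder, transpose_vecMulVec]

lemma householder_mul_self {v : ι → ℝ} (hv : v ≠ 0) : householder v * householder v = 1 := by
  have hvv : v ⬝ᵥ v ≠ 0 := by simpa using hv
  have hsq : vecMulVec v v * vecMulVec v v = (v ⬝ᵥ v) • vecMulVec v v := by
    rw [vecMulVec_mul_vecMulVec, vecMulVec_smul]
  simp only [householder, Matrix.sub_mul, Matrix.mul_sub, Matrix.one_mul, Matrix.mul_one,
    Matrix.smul_mul, Matrix.mul_smul, hsq, smul_smul, div_mul_cancel₀ _ hvv]
  module

lemma trace_le_card_sub_two {S : Matrix ι ι ℝ} (hS : Sᵀ * S = 1) (hdet : S.det = -1) :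
    S.trace ≤ Fintype.card ι - 2 := by
  obtain ⟨v, hv, hSv⟩ := exists_mulVec_eq_neg_self hS hdet
  have hvv : v ⬝ᵥ v ≠ 0 := by simpa using hv
  have hreflect : (S * householder v).trace = S.trace + 2 := by
    rw [householder, Matrix.mul_sub, Matrix.mul_one, Matrix.mul_smul, mul_vecMulVec, trace_sub,
      trace_smul, trace_vecMulVec, hSv, neg_dotProduct, smul_eq_mul]
    field_simp
    ring
  have horth : (S * householder v)ᵀ * (S * householder v) = 1 := by
    refine transpose_mul_self_mul hS ?_
    rw [transpose_householder, householder_mul_self hv]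
  linarith [trace_le_card_of_transpose_mul_self horth]

lemma trace_sub_two_mul_diag_le {P : Matrix ι ι ℝ} (hP : Pᵀ * P = 1) (hdet : P.det = 1)
    (j : ι) : P.trace - 2 * P j j ≤ Fintype.card ι - 2 := by
  set d : ι → ℝ := fun i => if i = j then -1 else 1
  have hd : (diagonal d)ᵀ * diagonal d = 1 := by
    rw [diagonal_transpose, diagonal_mul_diagonal, ← diagonal_one]
    congr 1
    ext i
    by_cases h : i = j <;> simp [d, h]
  have hdet' : (diagonal d * P).det = -1 := by
    simp [d, hdet, Finset.prod_ite_eq']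
  have htrace : (diagonal d * P).trace = P.trace - 2 * P j j := by
    have hterm (i : ι) : d i * P i i = P i i - if i = j then 2 * P j j else 0 := by
      by_cases h : i = j <;> simp only [d, h, ↓reduceIte] <;> ring
    simp [trace, diagonal_mul, hterm, Finset.sum_sub_distrib]
  rw [← htrace]
  exact trace_le_card_sub_two (transpose_mul_self_mul hd hP) hdet'

lemma sum_diag_mul_le_sum {P : Matrix ι ι ℝ} (hP : Pᵀ * P = 1) (hdet : P.det = 1) {μ : ι → ℝ}
    (hμ : ∀ i j, i ≠ j → 0 ≤ μ i + μ j) : ∑ i, P i i * μ i ≤ ∑ i, μ i := by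
  suffices 0 ≤ ∑ i, (1 - P i i) * μ i by
    simpa [sub_mul, Finset.sum_sub_distrib] using this
  have hdiag (i : ι) : 0 ≤ 1 - P i i := sub_nonneg.2 (diag_le_one_of_transpose_mul_self hP i)
  rcases isEmpty_or_nonempty ι with _ | _
  · simp
  obtain ⟨j, -, hj⟩ := Finset.univ.exists_min_image μ Finset.univ_nonempty
  by_cases h0 : 0 ≤ μ j
  · exact Finset.sum_nonneg fun i _ => mul_nonneg (hdiag i) (h0.trans (hj i (Finset.mem_univ i)))
  have hlow (i : ι) : (1 - P i i) * -μ j - (if i = j then 2 * (1 - P j j) * -μ j else 0)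
      ≤ (1 - P i i) * μ i := by
    by_cases h : i = j
    · subst h
      simp only [if_true]
      linarith
    · simp only [h, if_false, sub_zero]
      exact mul_le_mul_of_nonneg_left (by linarith [hμ i j h]) (hdiag i)
  calc 0 ≤ -μ j * (Fintype.card ι - 2 - (P.trace - 2 * P j j)) :=
        mul_nonneg (by linarith) (by linarith [trace_sub_two_mul_diag_le hP hdet j])
    _ = ∑ i, ((1 - P i i) * -μ j - if i = j then 2 * (1 - P j j) * -μ j else 0) := by
        simp only [trace, diag_apply, Finset.sum_sub_distrib, ← Finset.sum_mul, Finset.sum_const,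
          Finset.card_univ, nsmul_eq_mul, mul_one, Finset.sum_ite_eq', Finset.mem_univ,
          ↓reduceIte]
        ring
    _ ≤ ∑ i, (1 - P i i) * μ i := Finset.sum_le_sum fun i _ => hlow i

lemma exists_transpose_mul_self_and_conj_eq_diagonal {M : Matrix ι ι ℝ} (hM : Mᵀ = M) :
    ∃ (R : Matrix ι ι ℝ) (μ : ι → ℝ), Rᵀ * R = 1 ∧ Rᵀ * M * R = diagonal μ := by
  have hH : M.IsHermitian := isHermitian_iff_isSymm.mpr hM
  set U := hH.eigenvectorUnitary
  have hstar : star (U : Matrix ι ι ℝ) = (U : Matrix ι ι ℝ)ᵀ :=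
    conjTranspose_eq_transpose_of_trivial _
  refine ⟨U, hH.eigenvalues, ?_, ?_⟩
  · rw [← hstar, Unitary.coe_star_mul_self]
  · have := hH.conjStarAlgAut_star_eigenvectorUnitary
    rwa [Unitary.conjStarAlgAut_star_apply, hstar] at this

lemma apply_eq_and_diag_add_nonneg_of_isLocalMax_trace_givens {i j : ι} {N : Matrix ι ι ℝ}
    (h : IsLocalMax (fun t => ((givens i j t)ᵀ * N).trace) 0) :
    N i j = N j i ∧ 0 ≤ N i i + N j j := by
  simp only [trace_transpose_givens_mul] at h
  set a := N i i + N j j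
  set c := N i j - N j i
  have hderiv := (((Real.hasDerivAt_cos 0).sub_const 1).mul_const a |>.const_add N.trace).sub
    ((Real.hasDerivAt_sin 0).mul_const c)
  have hc : c = 0 := by simpa using h.hasDerivAt_eq_zero hderiv
  refine ⟨sub_eq_zero.mp hc, ?_⟩
  obtain ⟨t, ht, ht0, htπ⟩ :=
    ((h.filter_mono nhdsWithin_le_nhds).and (Ioo_mem_nhdsGT Real.pi_pos)).exists
  have hcos : Real.cos t < 1 := by
    simpa using Real.cos_lt_cos_of_nonneg_of_le_pi le_rfl htπ.le ht0
  simp only [hc, Real.cos_zero, Real.sin_zero] at ht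
  nlinarith

lemma isLocalMax_trace_conj_givens {B Q₀ R : Matrix ι ι ℝ}
    (hQ₀ : Q₀ᵀ * Q₀ = 1 ∧ Q₀.det = 1) (hR : Rᵀ * R = 1)
    (hloc : IsLocalMaxOn (fun Q : Matrix ι ι ℝ => (Qᵀ * B).trace)
      {Q : Matrix ι ι ℝ | Qᵀ * Q = 1 ∧ Q.det = 1} Q₀) {i j : ι} (hij : i ≠ j) :
    IsLocalMax (fun t => ((givens i j t)ᵀ * (Rᵀ * (Q₀ᵀ * B) * R)).trace) 0 := by
  set γ : ℝ → Matrix ι ι ℝ := fun t => Q₀ * (R * givens i j t * Rᵀ)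
  have hγ0 : γ 0 = Q₀ := by simp [γ, givens_zero, mul_eq_one_comm.mp hR]
  have hγ (t : ℝ) : (γ t)ᵀ * γ t = 1 ∧ (γ t).det = 1 := by
    have hconj := transpose_mul_self_conj_and_det hR
      ⟨givens_transpose_mul_self hij t, det_givens hij t⟩
    exact ⟨transpose_mul_self_mul hQ₀.1 hconj.1, by rw [det_mul, hQ₀.2, hconj.2, one_mul]⟩
  have hcont : Continuous γ :=
    continuous_const.matrix_mul ((continuous_const.matrix_mul (continuous_givens i j)).matrix_mul
      continuous_const)
  have htrace (t : ℝ) :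
      ((γ t)ᵀ * B).trace = ((givens i j t)ᵀ * (Rᵀ * (Q₀ᵀ * B) * R)).trace := by
    simp only [γ, transpose_mul, transpose_transpose, Matrix.mul_assoc]
    rw [trace_mul_comm]
    simp only [Matrix.mul_assoc]
  rw [← hγ0] at hloc
  have := hloc.comp_continuousOn (s := Set.univ) (fun t _ => hγ t) hcont.continuousOn trivial
  simpa [isLocalMaxOn_univ_iff, Function.comp_def, htrace] using this

lemma exists_conj_eq_diagonal_of_isLocalMaxOn {B Q₀ : Matrix ι ι ℝ}
    (hQ₀ : Q₀ᵀ * Q₀ = 1 ∧ Q₀.det = 1)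
    (hloc : IsLocalMaxOn (fun Q : Matrix ι ι ℝ => (Qᵀ * B).trace)
      {Q : Matrix ι ι ℝ | Qᵀ * Q = 1 ∧ Q.det = 1} Q₀) :
    ∃ (R : Matrix ι ι ℝ) (μ : ι → ℝ), Rᵀ * R = 1 ∧ Rᵀ * (Q₀ᵀ * B) * R = diagonal μ ∧
      ∀ i j, i ≠ j → 0 ≤ μ i + μ j := by
  have hcond {R : Matrix ι ι ℝ} (hR : Rᵀ * R = 1) {i j : ι} (hij : i ≠ j) :=
    apply_eq_and_diag_add_nonneg_of_isLocalMax_trace_givens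
      (isLocalMax_trace_conj_givens hQ₀ hR hloc hij)
  have hsymm : (Q₀ᵀ * B)ᵀ = Q₀ᵀ * B := by
    ext a b
    rcases eq_or_ne b a with rfl | hba
    · rfl
    · simpa using (hcond (R := 1) (by simp) hba).1
  obtain ⟨R, μ, hR, hdiag⟩ := exists_transpose_mul_self_and_conj_eq_diagonal hsymm
  refine ⟨R, μ, hR, hdiag, fun i j hij => ?_⟩
  simpa [hdiag, hij] using (hcond hR hij).2

end Matrix

open Matrix

/-- Paper's Proposition 8: `SO(n)` satisfies Assumption 2, i.e. every local
maximum of `Q ↦ trace(Qᵀ B)` on `SO(n)` is a global maximum. -/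
theorem stmt5 {n : ℕ} (B Q₀ : Matrix (Fin n) (Fin n) ℝ)
    (hQ₀ : Q₀ᵀ * Q₀ = 1 ∧ Q₀.det = 1)
    (hloc : IsLocalMaxOn (fun Q : Matrix (Fin n) (Fin n) ℝ => (Qᵀ * B).trace)
      {Q : Matrix (Fin n) (Fin n) ℝ | Qᵀ * Q = 1 ∧ Q.det = 1} Q₀) :
    ∀ Q : Matrix (Fin n) (Fin n) ℝ, Qᵀ * Q = 1 → Q.det = 1 →
      (Qᵀ * B).trace ≤ (Q₀ᵀ * B).trace := by
  intro Q hQ hQdet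
  obtain ⟨R, μ, hR, hdiag, hpair⟩ := exists_conj_eq_diagonal_of_isLocalMaxOn hQ₀ hloc
  have hR' : R * Rᵀ = 1 := mul_eq_one_comm.mp hR
  have hP : (Rᵀ * (Qᵀ * Q₀) * R)ᵀ * (Rᵀ * (Qᵀ * Q₀) * R) = 1 ∧
      (Rᵀ * (Qᵀ * Q₀) * R).det = 1 := by
    simpa using transpose_mul_self_conj_and_det (R := (Rᵀ)) (by rwa [transpose_transpose])
      (transpose_mul_self_transpose_mul_and_det ⟨hQ, hQdet⟩ hQ₀)
  have hB : Qᵀ * B = Qᵀ * Q₀ * (Q₀ᵀ * B) := by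
    rw [Matrix.mul_assoc, ← Matrix.mul_assoc Q₀, mul_eq_one_comm.mp hQ₀.1, Matrix.one_mul]
  calc (Qᵀ * B).trace = ∑ i, (Rᵀ * (Qᵀ * Q₀) * R) i i * μ i := by
        rw [hB, ← trace_conj_mul_conj hR', hdiag]
        simp [trace, mul_diagonal]
    _ ≤ ∑ i, μ i := sum_diag_mul_le_sum hP.1 hP.2 hpair
    _ = (Q₀ᵀ * B).trace := by
        rw [← trace_diagonal, ← hdiag, trace_mul_cycle, hR', Matrix.one_mul]
end

section
/- Let B be a real symmetric positive semidefinite n×n matrix and let 1 ≤ p ≤ n. Every local maximum of the function Π ↦ trace(Π B) on the set of rank-p orthogonal projectors is a global maximum: if Π₀ is a rank-p orthogonal projector that is a local maximizer of Π ↦ trace(Π B) on this set (with respect to the topology it inherits as a subset of the n×n real matrices), then trace(Π₀ B) ≥ trace(Π B) for every rank-p orthogonal projector Π. -/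
/-!
Let `Q` be a local maximiser of `P ↦ tr (P B)` among rank-`p` orthogonal projectors. Rotating a
unit vector `u ∈ range Q` towards a unit vector `v ∈ ker Q` is a curve of rank-`p` projectors
through `Q` along which the objective changes by `(vᵀBv - uᵀBu) sin² t + 2 uᵀBv sin t cos t`;
local maximality forces `uᵀBv = 0` and `vᵀBv ≤ uᵀBu`. So `Q` commutes with `B`, and some `c`
separates the Rayleigh quotients of `B` on `range Q` (all `≥ c`) from those on `ker Q` (all
`≤ c`). Then `B - c = X - Y` with `X, Y ⪰ 0` and `X = Q (B - c) Q`, and for any rank-`p`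
projector `P`, `tr (P B) = tr (P X) - tr (P Y) + c p ≤ tr X + c p = tr (Q B)`.
-/

open Matrix Real Filter Topology

theorem eq_zero_and_nonpos_of_eventually_sin_sq_add_sin_mul_cos_nonpos {a b : ℝ}
    (h : ∀ᶠ t in 𝓝 0, a * sin t ^ 2 + b * (sin t * cos t) ≤ 0) : b = 0 ∧ a ≤ 0 := by
  have hmax : IsLocalMax (fun t => a * sin t ^ 2 + b * (sin t * cos t)) 0 := by
    simpa [IsLocalMax, IsMaxFilter] using h
  have hderiv : HasDerivAt (fun t => a * sin t ^ 2 + b * (sin t * cos t)) b 0 := by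
    have := (((hasDerivAt_sin 0).fun_pow 2).const_mul a).fun_add
      (((hasDerivAt_sin 0).fun_mul (hasDerivAt_cos 0)).const_mul b)
    simpa using this
  have hb : b = 0 := hmax.hasDerivAt_eq_zero hderiv
  subst hb
  obtain ⟨t, ht, ht0, htπ⟩ :=
    ((h.filter_mono nhdsWithin_le_nhds).and (Ioo_mem_nhdsGT pi_pos)).exists
  rw [zero_mul, add_zero] at ht
  exact ⟨rfl, nonpos_of_mul_nonpos_left ht (pow_pos (sin_pos_of_pos_of_lt_pi ht0 htπ) 2)⟩

variable {ι : Type*}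

/-- Turns the direction `u` of `range Q` towards `v` by the angle `t`. -/
noncomputable def rotationCurve (Q : Matrix ι ι ℝ) (u v : ι → ℝ) (t : ℝ) : Matrix ι ι ℝ :=
  Q - vecMulVec u u + vecMulVec (cos t • u + sin t • v) (cos t • u + sin t • v)

theorem rotationCurve_zero (Q : Matrix ι ι ℝ) (u v : ι → ℝ) : rotationCurve Q u v 0 = Q := by
  simp [rotationCurve]

theorem continuous_rotationCurve (Q : Matrix ι ι ℝ) (u v : ι → ℝ) :
    Continuous (rotationCurve Q u v) := by
  have hw : Continuous fun t => cos t • u + sin t • v := by fun_prop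
  exact continuous_const.add (hw.matrix_vecMulVec hw)

variable [Fintype ι]

theorem Matrix.mulVec_dotProduct_of_transpose_eq {A : Matrix ι ι ℝ} (hA : Aᵀ = A)
    (x y : ι → ℝ) : (A *ᵥ x) ⬝ᵥ y = x ⬝ᵥ (A *ᵥ y) := by
  rw [← hA, dotProduct_mulVec, vecMul_transpose, hA]

theorem Matrix.isStarProjection_iff_transpose {A : Matrix ι ι ℝ} :
    IsStarProjection A ↔ Aᵀ = A ∧ A * A = A := by
  rw [isStarProjection_iff', star_eq_conjTranspose, conjTranspose_eq_transpose_of_trivial,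
    and_comm]

theorem Matrix.isStarProjection_vecMulVec_self {u : ι → ℝ} (hu : u ⬝ᵥ u = 1) :
    IsStarProjection (vecMulVec u u) :=
  isStarProjection_iff_transpose.2
    ⟨transpose_vecMulVec u u, by rw [vecMulVec_mul_vecMulVec, hu, one_smul]⟩

theorem IsStarProjection.trace_mul_nonneg {P X : Matrix ι ι ℝ} (hP : IsStarProjection P)
    (hX : X.PosSemidef) : 0 ≤ (P * X).trace := by
  have h := (hX.mul_mul_conjTranspose_same P).trace_nonneg
  rwa [show Pᴴ = P from hP.isSelfAdjoint, trace_mul_cycle, hP.isIdempotentElem.eq] at h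

theorem IsStarProjection.trace_mul_le_trace [DecidableEq ι] {P X : Matrix ι ι ℝ}
    (hP : IsStarProjection P) (hX : X.PosSemidef) : (P * X).trace ≤ X.trace := by
  have := hP.one_sub.trace_mul_nonneg hX
  rwa [Matrix.sub_mul, Matrix.one_mul, trace_sub, sub_nonneg] at this

theorem Matrix.posSemidef_transpose_mul_mul {A M : Matrix ι ι ℝ} (hM : Mᵀ = M)
    (h : ∀ x, 0 ≤ (A *ᵥ x) ⬝ᵥ (M *ᵥ (A *ᵥ x))) : (Aᵀ * M * A).PosSemidef := by
  refine .of_dotProduct_mulVec_nonneg ?_ fun x => ?_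
  · simp [IsHermitian, conjTranspose_eq_transpose_of_trivial, transpose_mul, hM, Matrix.mul_assoc]
  · simpa [← mulVec_mulVec, dotProduct_mulVec _ Aᵀ, vecMul_transpose, star_trivial] using h x

theorem exists_eq_smul_of_ne_zero {y : ι → ℝ} (hy : y ≠ 0) :
    ∃ r : ℝ, r ≠ 0 ∧ ∃ u : ι → ℝ, u ⬝ᵥ u = 1 ∧ y = r • u := by
  have hpos : 0 < y ⬝ᵥ y := dotProduct_self_star_pos_iff.2 hy
  have hr : √(y ⬝ᵥ y) ≠ 0 := (sqrt_pos.2 hpos).ne'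
  refine ⟨√(y ⬝ᵥ y), hr, (√(y ⬝ᵥ y))⁻¹ • y, ?_, (smul_inv_smul₀ hr y).symm⟩
  rw [smul_dotProduct, dotProduct_smul, smul_smul, smul_eq_mul, ← sq, inv_pow, sq_sqrt hpos.le,
    inv_mul_cancel₀ hpos.ne']

theorem Matrix.trace_eq_rank_of_isIdempotentElem [DecidableEq ι] {K : Type*} [Field K]
    {A : Matrix ι ι K} (hA : IsIdempotentElem A) : A.trace = A.rank := by
  have hproj : LinearMap.IsProj (LinearMap.range A.mulVecLin) A.mulVecLin :=
    LinearMap.IsIdempotentElem.isProj_range _ (hA.map Matrix.toLinAlgEquiv')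
  rw [Matrix.rank, ← hproj.trace, ← Matrix.toLin'_apply',
    LinearMap.trace_eq_matrix_trace K (Pi.basisFun K ι), LinearMap.toMatrix_eq_toMatrix',
    LinearMap.toMatrix'_toLin']

/-- The rank condition is stated through the trace, which equals the rank for projectors. -/
def grassmannProjectors (ι : Type*) [Fintype ι] (p : ℕ) : Set (Matrix ι ι ℝ) :=
  {P | IsStarProjection P ∧ P.trace = p}

theorem grassmannProjectors_eq_setOf_rank [DecidableEq ι] (p : ℕ) :
    grassmannProjectors ι p = {P | Pᵀ = P ∧ P * P = P ∧ P.rank = p} := by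
  ext P
  simp only [grassmannProjectors, Set.mem_ofPred_eq, isStarProjection_iff_transpose, and_assoc]
  refine and_congr_right fun _ => and_congr_right fun hPP => ?_
  rw [trace_eq_rank_of_isIdempotentElem hPP, Nat.cast_inj]

theorem rotationCurve_mem_grassmannProjectors {Q : Matrix ι ι ℝ} {p : ℕ}
    (hQ : Q ∈ grassmannProjectors ι p) {u v : ι → ℝ} (hu : u ⬝ᵥ u = 1) (hQu : Q *ᵥ u = u)
    (hv : v ⬝ᵥ v = 1) (hQv : Q *ᵥ v = 0) (t : ℝ) :
    rotationCurve Q u v t ∈ grassmannProjectors ι p := by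
  obtain ⟨hQ, htr⟩ := hQ
  have hQt : Qᵀ = Q := (isStarProjection_iff_transpose.1 hQ).1
  have huv : u ⬝ᵥ v = 0 := by
    rw [← hQu, mulVec_dotProduct_of_transpose_eq hQt, hQv, dotProduct_zero]
  set w := cos t • u + sin t • v
  have hw : w ⬝ᵥ w = 1 := by
    simp only [w, add_dotProduct, dotProduct_add, smul_dotProduct, dotProduct_smul, smul_eq_mul,
      hu, hv, huv, dotProduct_comm v u]
    nlinarith [sin_sq_add_cos_sq t]
  have hR : IsStarProjection (Q - vecMulVec u u) :=
    (isStarProjection_vecMulVec_self hu).sub_of_mul_eq_left hQ (by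
      rw [vecMulVec_mul, ← mulVec_transpose, hQt, hQu])
  have hRw : (Q - vecMulVec u u) * vecMulVec w w = 0 := by
    rw [mul_vecMulVec, sub_mulVec, vecMulVec_mulVec]
    simp [w, mulVec_add, mulVec_smul, hQu, hQv, dotProduct_add, dotProduct_smul, hu, huv]
  refine ⟨hR.add (isStarProjection_vecMulVec_self hw) hRw, ?_⟩
  rw [rotationCurve, trace_add, trace_sub, trace_vecMulVec, trace_vecMulVec, hu, hw, htr,
    sub_add_cancel]

theorem trace_rotationCurve_mul {B : Matrix ι ι ℝ} (hB : Bᵀ = B) (Q : Matrix ι ι ℝ)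
    (u v : ι → ℝ) (t : ℝ) :
    (rotationCurve Q u v t * B).trace = (Q * B).trace
      + ((v ⬝ᵥ B *ᵥ v - u ⬝ᵥ B *ᵥ u) * sin t ^ 2 + 2 * (u ⬝ᵥ B *ᵥ v) * (sin t * cos t)) := by
  have hvu : v ⬝ᵥ B *ᵥ u = u ⬝ᵥ B *ᵥ v := by
    rw [dotProduct_comm, mulVec_dotProduct_of_transpose_eq hB]
  simp only [rotationCurve, Matrix.add_mul, Matrix.sub_mul, trace_add, trace_sub, vecMulVec_mul,
    trace_vecMulVec, ← mulVec_transpose, hB, mulVec_add, mulVec_smul, dotProduct_add,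
    add_dotProduct, smul_dotProduct, dotProduct_smul, smul_eq_mul, hvu]
  linear_combination (u ⬝ᵥ B *ᵥ u) * sin_sq_add_cos_sq t

theorem IsLocalMaxOn.dotProduct_mulVec_eq_zero_and_le_of_unit {p : ℕ} {B Q : Matrix ι ι ℝ}
    (hB : Bᵀ = B) (hQ : Q ∈ grassmannProjectors ι p)
    (hloc : IsLocalMaxOn (fun P => (P * B).trace) (grassmannProjectors ι p) Q)
    {u v : ι → ℝ} (hu : u ⬝ᵥ u = 1) (hQu : Q *ᵥ u = u) (hv : v ⬝ᵥ v = 1) (hQv : Q *ᵥ v = 0) :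
    u ⬝ᵥ B *ᵥ v = 0 ∧ v ⬝ᵥ B *ᵥ v ≤ u ⬝ᵥ B *ᵥ u := by
  have hcurve : Tendsto (rotationCurve Q u v) (𝓝 0) (𝓝[grassmannProjectors ι p] Q) := by
    refine tendsto_nhdsWithin_iff.2 ⟨?_, .of_forall fun t => ?_⟩
    · simpa [rotationCurve_zero] using (continuous_rotationCurve Q u v).tendsto 0
    · exact rotationCurve_mem_grassmannProjectors hQ hu hQu hv hQv t
  have h : ∀ᶠ t in 𝓝 0, (v ⬝ᵥ B *ᵥ v - u ⬝ᵥ B *ᵥ u) * sin t ^ 2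
      + 2 * (u ⬝ᵥ B *ᵥ v) * (sin t * cos t) ≤ 0 :=
    (hcurve.eventually hloc).mono fun t ht => by
      rwa [← add_le_iff_nonpos_right, ← trace_rotationCurve_mul hB]
  obtain ⟨hγ, hαβ⟩ := eq_zero_and_nonpos_of_eventually_sin_sq_add_sin_mul_cos_nonpos h
  exact ⟨by linarith, by linarith⟩

theorem IsLocalMaxOn.dotProduct_mulVec_eq_zero_and_le {p : ℕ} {B Q : Matrix ι ι ℝ}
    (hB : Bᵀ = B) (hQ : Q ∈ grassmannProjectors ι p)
    (hloc : IsLocalMaxOn (fun P => (P * B).trace) (grassmannProjectors ι p) Q)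
    {a b : ι → ℝ} (hQa : Q *ᵥ a = a) (hQb : Q *ᵥ b = 0) :
    a ⬝ᵥ B *ᵥ b = 0 ∧ (b ⬝ᵥ B *ᵥ b) * (a ⬝ᵥ a) ≤ (a ⬝ᵥ B *ᵥ a) * (b ⬝ᵥ b) := by
  rcases eq_or_ne a 0 with rfl | ha
  · simp
  rcases eq_or_ne b 0 with rfl | hb
  · simp
  obtain ⟨r, hr, u, hu, rfl⟩ := exists_eq_smul_of_ne_zero ha
  obtain ⟨s, hs, v, hv, rfl⟩ := exists_eq_smul_of_ne_zero hb
  rw [mulVec_smul] at hQa hQb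
  have hQu : Q *ᵥ u = u := smul_right_injective _ hr hQa
  have hQv : Q *ᵥ v = 0 := (smul_eq_zero.1 hQb).resolve_left hs
  obtain ⟨hγ, hαβ⟩ := hloc.dotProduct_mulVec_eq_zero_and_le_of_unit hB hQ hu hQu hv hQv
  simp only [mulVec_smul, smul_dotProduct, dotProduct_smul, smul_eq_mul, hu, hv, hγ]
  refine ⟨by ring, ?_⟩
  nlinarith [mul_nonneg (sq_nonneg r) (sq_nonneg s)]

theorem IsStarProjection.mul_mul_one_sub_eq_zero [DecidableEq ι] {Q B : Matrix ι ι ℝ}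
    (hQ : IsStarProjection Q) (h : ∀ a b, Q *ᵥ a = a → Q *ᵥ b = 0 → a ⬝ᵥ B *ᵥ b = 0) :
    Q * B * (1 - Q) = 0 := by
  have hQt : Qᵀ = Q := (isStarProjection_iff_transpose.1 hQ).1
  refine ext_iff_mulVec.2 fun y => ?_
  set b := (1 - Q) *ᵥ y
  set w := Q *ᵥ (B *ᵥ b)
  have hQb : Q *ᵥ b = 0 := by rw [mulVec_mulVec, hQ.mul_one_sub_self, zero_mulVec]
  have hQw : Q *ᵥ w = w := by rw [mulVec_mulVec, hQ.isIdempotentElem.eq]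
  have hww : w ⬝ᵥ w = 0 := by
    rw [dotProduct_comm, mulVec_dotProduct_of_transpose_eq hQt, hQw, dotProduct_comm]
    exact h w b hQw hQb
  rw [zero_mulVec, ← mulVec_mulVec, ← mulVec_mulVec]
  exact dotProduct_self_eq_zero.1 hww

theorem exists_separating_const {Q B : Matrix ι ι ℝ} (hQ : IsIdempotentElem Q)
    (hQ0 : Q ≠ 0) (hB : B.PosSemidef)
    (h : ∀ a b, Q *ᵥ a = a → Q *ᵥ b = 0 →
      (b ⬝ᵥ B *ᵥ b) * (a ⬝ᵥ a) ≤ (a ⬝ᵥ B *ᵥ a) * (b ⬝ᵥ b)) :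
    ∃ c : ℝ, (∀ a, Q *ᵥ a = a → c * (a ⬝ᵥ a) ≤ a ⬝ᵥ B *ᵥ a) ∧
      (∀ b, Q *ᵥ b = 0 → b ⬝ᵥ B *ᵥ b ≤ c * (b ⬝ᵥ b)) := by
  set S := (fun a => (a ⬝ᵥ B *ᵥ a) / (a ⬝ᵥ a)) '' {a | Q *ᵥ a = a ∧ a ≠ 0}
  have hne : S.Nonempty := by
    obtain ⟨x, hx⟩ : ∃ x, Q *ᵥ x ≠ 0 := by
      by_contra! hx
      exact hQ0 (ext_iff_mulVec.2 fun x => by rw [hx, zero_mulVec])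
    exact ⟨_, Q *ᵥ x, ⟨by rw [mulVec_mulVec, hQ.eq], hx⟩, rfl⟩
  have hbdd : BddBelow S := ⟨0, by
    rintro _ ⟨a, -, rfl⟩
    exact div_nonneg (by simpa using hB.dotProduct_mulVec_nonneg a)
      (by simpa using dotProduct_self_star_nonneg a)⟩
  refine ⟨sInf S, fun a hQa => ?_, fun b hQb => ?_⟩
  · rcases eq_or_ne a 0 with rfl | ha
    · simp
    exact (le_div_iff₀ (dotProduct_self_star_pos_iff.2 ha)).1
      (csInf_le hbdd ⟨a, ⟨hQa, ha⟩, rfl⟩)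
  · rcases eq_or_ne b 0 with rfl | hb
    · simp
    refine (div_le_iff₀ (dotProduct_self_star_pos_iff.2 hb)).1 (le_csInf hne ?_)
    rintro _ ⟨a, ⟨hQa, ha⟩, rfl⟩
    exact (div_le_div_iff₀ (dotProduct_self_star_pos_iff.2 hb)
      (dotProduct_self_star_pos_iff.2 ha)).2 (h a b hQa hQb)

theorem IsStarProjection.trace_mul_le_of_separated [DecidableEq ι] {P Q B : Matrix ι ι ℝ}
    (hP : IsStarProjection P) (hQ : IsStarProjection Q) (htr : P.trace = Q.trace) (hB : Bᵀ = B)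
    (hoff : Q * B * (1 - Q) = 0) {c : ℝ}
    (hlow : ∀ a, Q *ᵥ a = a → c * (a ⬝ᵥ a) ≤ a ⬝ᵥ B *ᵥ a)
    (hup : ∀ b, Q *ᵥ b = 0 → b ⬝ᵥ B *ᵥ b ≤ c * (b ⬝ᵥ b)) :
    (P * B).trace ≤ (Q * B).trace := by
  obtain ⟨hQt, hQQ⟩ := isStarProjection_iff_transpose.1 hQ
  set X := Qᵀ * (B - c • 1) * Q
  set Y := (1 - Q)ᵀ * (c • 1 - B) * (1 - Q)
  have hX : X.PosSemidef := by
    refine posSemidef_transpose_mul_mul (by simp [transpose_sub, hB]) fun x => ?_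
    rw [sub_mulVec, smul_mulVec, one_mulVec, dotProduct_sub, dotProduct_smul, smul_eq_mul,
      sub_nonneg]
    exact hlow (Q *ᵥ x) (by rw [mulVec_mulVec, hQQ])
  have hY : Y.PosSemidef := by
    refine posSemidef_transpose_mul_mul (by simp [transpose_sub, hB]) fun x => ?_
    rw [sub_mulVec (c • 1), smul_mulVec, one_mulVec, dotProduct_sub, dotProduct_smul,
      smul_eq_mul, sub_nonneg]
    exact hup ((1 - Q) *ᵥ x) (by rw [mulVec_mulVec, hQ.mul_one_sub_self, zero_mulVec])
  have hoff' : (1 - Q) * B * Q = 0 := by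
    simpa [transpose_mul, transpose_sub, hQt, hB, Matrix.mul_assoc] using congrArg transpose hoff
  have hdecomp : B - c • 1 = X - Y := by
    have h1 : Q * (B - c • 1) * (1 - Q) = 0 := by
      rw [Matrix.mul_sub Q B, Matrix.sub_mul, hoff, Matrix.mul_smul, Matrix.mul_one,
        Matrix.smul_mul, hQ.mul_one_sub_self, smul_zero, sub_zero]
    have h2 : (1 - Q) * (B - c • 1) * Q = 0 := by
      rw [Matrix.mul_sub (1 - Q) B, Matrix.sub_mul, hoff', Matrix.mul_smul, Matrix.mul_one,
        Matrix.smul_mul, hQ.one_sub_mul_self, smul_zero, sub_zero]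
    simp only [X, Y, hQt, transpose_sub, transpose_one, ← neg_sub B, Matrix.mul_neg,
      Matrix.neg_mul, sub_neg_eq_add]
    generalize B - c • 1 = M at h1 h2 ⊢
    linear_combination (norm := noncomm_ring) h1 + h2
  calc (P * B).trace = (P * X).trace - (P * Y).trace + c * P.trace := by
        rw [← trace_sub, ← Matrix.mul_sub, ← hdecomp, Matrix.mul_sub, trace_sub, Matrix.mul_smul,
          Matrix.mul_one, trace_smul, smul_eq_mul]
        ring
    _ ≤ X.trace + c * Q.trace := by
        rw [htr]
        linarith [hP.trace_mul_le_trace hX, hP.trace_mul_nonneg hY]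
    _ = (Q * B).trace := by
        rw [trace_mul_cycle, hQt, hQQ, Matrix.mul_sub, trace_sub, Matrix.mul_smul, Matrix.mul_one,
          trace_smul, smul_eq_mul]
        ring

theorem IsLocalMaxOn.isMaxOn_grassmannProjectors [DecidableEq ι] {p : ℕ} (hp : 1 ≤ p)
    {B Q : Matrix ι ι ℝ} (hB : B.PosSemidef) (hQ : Q ∈ grassmannProjectors ι p)
    (hloc : IsLocalMaxOn (fun P => (P * B).trace) (grassmannProjectors ι p) Q) :
    IsMaxOn (fun P => (P * B).trace) (grassmannProjectors ι p) Q := by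
  have hBt : Bᵀ = B := by simpa [conjTranspose_eq_transpose_of_trivial] using hB.isHermitian.eq
  have hQ0 : Q ≠ 0 := by
    rintro rfl
    have : (0 : ℝ) = p := trace_zero ι ℝ ▸ hQ.2
    norm_cast at this
    omega
  obtain ⟨c, hlow, hup⟩ := exists_separating_const hQ.1.isIdempotentElem hQ0 hB
    fun a b ha hb => (hloc.dotProduct_mulVec_eq_zero_and_le hBt hQ ha hb).2
  have hoff := hQ.1.mul_mul_one_sub_eq_zero
    fun a b ha hb => (hloc.dotProduct_mulVec_eq_zero_and_le hBt hQ ha hb).1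
  exact fun P hP =>
    hP.1.trace_mul_le_of_separated hQ.1 (hP.2.trans hQ.2.symm) hBt hoff hlow hup

theorem stmt6_general {n p : ℕ} (hp : 1 ≤ p)
    (B : Matrix (Fin n) (Fin n) ℝ) (hB : B.PosSemidef)
    (P₀ : Matrix (Fin n) (Fin n) ℝ)
    (hP₀ : P₀ᵀ = P₀ ∧ P₀ * P₀ = P₀ ∧ P₀.rank = p)
    (hloc : IsLocalMaxOn (fun P : Matrix (Fin n) (Fin n) ℝ => (P * B).trace)
      {P : Matrix (Fin n) (Fin n) ℝ | Pᵀ = P ∧ P * P = P ∧ P.rank = p} P₀) :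
    ∀ P : Matrix (Fin n) (Fin n) ℝ, Pᵀ = P → P * P = P → P.rank = p →
      (P * B).trace ≤ (P₀ * B).trace := by
  have hmem : ∀ P, Pᵀ = P ∧ P * P = P ∧ P.rank = p → P ∈ grassmannProjectors (Fin n) p :=
    fun P => (Set.ext_iff.1 (grassmannProjectors_eq_setOf_rank p) P).2
  rw [← grassmannProjectors_eq_setOf_rank] at hloc
  exact fun P hPt hPP hPr =>
    hloc.isMaxOn_grassmannProjectors hp hB (hmem P₀ hP₀) (hmem P ⟨hPt, hPP, hPr⟩)

/-- Paper's Proposition 9: the Grassmann manifold in its projector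
representation satisfies Assumption 2, i.e. every local maximum of
`Π ↦ trace(Π B)` (with `B` symmetric positive semidefinite) on the set of
rank-`p` orthogonal projectors is a global maximum. -/
theorem stmt6 {n p : ℕ} (hp : 1 ≤ p) (hpn : p ≤ n)
    (B : Matrix (Fin n) (Fin n) ℝ) (hB : B.PosSemidef)
    (P₀ : Matrix (Fin n) (Fin n) ℝ)
    (hP₀ : P₀ᵀ = P₀ ∧ P₀ * P₀ = P₀ ∧ P₀.rank = p)
    (hloc : IsLocalMaxOn (fun P : Matrix (Fin n) (Fin n) ℝ => (P * B).trace)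
      {P : Matrix (Fin n) (Fin n) ℝ | Pᵀ = P ∧ P * P = P ∧ P.rank = p} P₀) :
    ∀ P : Matrix (Fin n) (Fin n) ℝ, Pᵀ = P → P * P = P → P.rank = p →
      (P * B).trace ≤ (P₀ * B).trace :=
  stmt6_general hp B hB P₀ hP₀ hloc
end

section
/- Let B be a real n×n matrix with det B ≤ 0, let R be the unique symmetric positive semidefinite square root of Bᵀ B, and suppose the smallest eigenvalue of R has multiplicity 1. Then there is exactly one Q ∈ SO(n) maximizing trace(Qᵀ B) over SO(n). -/
/-!
Diagonalise `R = V D Vᵀ` with `V` orthogonal and `D = diag μ`, where `μ j` is the simple smallest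
eigenvalue. The columns of `B V` are orthogonal with norms `μ i`, so `B = W D Vᵀ` for an orthogonal
`W`, and `det B ≤ 0` lets us take `det W * det V = -1` (if `det W * det V = 1` then `det B = ∏ μ i`
vanishes, and the column of `W` belonging to a zero `μ i` may be flipped). Then `Q ↦ N = Vᵀ Qᵀ W`
maps `SO(n)` onto the orthogonal matrices of determinant `-1`, with `tr (Qᵀ B) = tr (N D)`.
Such an `N` has `-1` as an eigenvalue, so `tr N ≤ n - 2`, and
`∑ μ i - 2 μ j - tr (N D) = ∑ (1 - N i i) (μ i - μ j) + μ j (n - 2 - tr N) ≥ 0`,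
with equality only if `N i i = 1` for all `i ≠ j`, which forces `N = diag (1, …, -1, …, 1)`.
-/

open Matrix Module

lemma eq_zero_of_sum_sq_eq_one_of_eq_one {ι : Type*} [Fintype ι] [DecidableEq ι] {x : ι → ℝ}
    (hx : ∑ k, x k ^ 2 = 1) {i k : ι} (hi : x i = 1) (hk : k ≠ i) : x k = 0 := by
  have : x k ^ 2 + x i ^ 2 ≤ 1 := by
    rw [← hx, ← Finset.sum_pair (f := fun m => x m ^ 2) hk]
    exact Finset.sum_le_sum_of_subset_of_nonneg (Finset.subset_univ _) fun m _ _ => sq_nonneg (x m)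
  nlinarith

namespace Matrix

lemma mulVec_dotProduct_mulVec_le {m n : Type*} [Fintype m] [Fintype n] (A : Matrix m n ℝ)
    (v : n → ℝ) : (A *ᵥ v) ⬝ᵥ (A *ᵥ v) ≤ (A * Aᵀ).trace * (v ⬝ᵥ v) := by
  simp only [dotProduct, mulVec, trace, diag, mul_apply, transpose_apply]
  rw [Finset.sum_mul]
  refine Finset.sum_le_sum fun i _ => ?_
  simpa [sq] using Finset.sum_mul_sq_le_sq_mul_sq Finset.univ (A i) v

section CoordReflection

variable {ι R : Type*} [DecidableEq ι] [CommRing R] (j : ι)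

def coordReflection : Matrix ι ι R :=
  diagonal (Function.update 1 j (-1))

@[simp]
lemma transpose_coordReflection : (coordReflection j : Matrix ι ι R)ᵀ = coordReflection j :=
  diagonal_transpose _

variable [Fintype ι]

@[simp]
lemma det_coordReflection : (coordReflection j : Matrix ι ι R).det = -1 := by
  simp [coordReflection, det_diagonal, Function.update_apply, Finset.prod_ite_eq']

lemma coordReflection_mem_orthogonalGroup :
    (coordReflection j : Matrix ι ι R) ∈ orthogonalGroup ι R := by
  rw [mem_orthogonalGroup_iff', transpose_coordReflection, coordReflection, diagonal_mul_diagonal,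
    ← diagonal_one]
  congr 1
  ext i
  by_cases h : i = j <;> simp [h]

lemma coordReflection_mul_diagonal_of_eq_zero {μ : ι → R} (hμ : μ j = 0) :
    coordReflection j * diagonal μ = diagonal μ := by
  rw [coordReflection, diagonal_mul_diagonal]
  congr 1
  ext i
  by_cases h : i = j <;> simp [h, hμ]

lemma trace_coordReflection_mul_diagonal (μ : ι → R) :
    (coordReflection j * diagonal μ).trace = ∑ i, μ i - 2 * μ j := by
  simp only [coordReflection, diagonal_mul_diagonal, trace_diagonal, Function.update_apply]
  simp only [Pi.one_apply, ite_mul, neg_mul, one_mul, Finset.sum_ite, Finset.filter_eq',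
    Finset.mem_univ, ↓reduceIte, Finset.sum_neg_distrib, Finset.sum_singleton, Finset.filter_ne',
    Finset.sum_erase_eq_sub]
  ring

end CoordReflection

variable {ι : Type*} [Fintype ι] [DecidableEq ι]

section Orthogonal

variable {N : Matrix ι ι ℝ}

lemma transpose_mul_self_of_mem_orthogonalGroup (hN : N ∈ orthogonalGroup ι ℝ) : Nᵀ * N = 1 :=
  (mem_orthogonalGroup_iff' ι ℝ).mp hN

lemma mul_transpose_self_of_mem_orthogonalGroup (hN : N ∈ orthogonalGroup ι ℝ) : N * Nᵀ = 1 :=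
  (mem_orthogonalGroup_iff ι ℝ).mp hN

lemma transpose_mem_orthogonalGroup (hN : N ∈ orthogonalGroup ι ℝ) :
    Nᵀ ∈ orthogonalGroup ι ℝ :=
  transpose_mem_unitaryGroup_iff.mpr hN

lemma det_mul_self_of_mem_orthogonalGroup (hN : N ∈ orthogonalGroup ι ℝ) :
    N.det * N.det = 1 := by
  simpa using congrArg det (transpose_mul_self_of_mem_orthogonalGroup hN)

lemma sum_sq_apply_right_of_mem_orthogonalGroup (hN : N ∈ orthogonalGroup ι ℝ) (i : ι) :
    ∑ k, N k i ^ 2 = 1 := by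
  simpa [mul_apply, sq] using
    congrFun (congrFun (transpose_mul_self_of_mem_orthogonalGroup hN) i) i

lemma sum_sq_apply_left_of_mem_orthogonalGroup (hN : N ∈ orthogonalGroup ι ℝ) (i : ι) :
    ∑ k, N i k ^ 2 = 1 :=
  sum_sq_apply_right_of_mem_orthogonalGroup (transpose_mem_orthogonalGroup hN) i

lemma apply_le_one_of_mem_orthogonalGroup (hN : N ∈ orthogonalGroup ι ℝ) (k i : ι) :
    N k i ≤ 1 := by
  have : N k i ^ 2 ≤ 1 := sum_sq_apply_right_of_mem_orthogonalGroup hN i ▸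
    Finset.single_le_sum (fun k _ => sq_nonneg (N k i)) (Finset.mem_univ k)
  nlinarith

lemma eq_coordReflection_of_diag_eq_one {j : ι} (hN : N ∈ orthogonalGroup ι ℝ)
    (hdet : N.det = -1) (hdiag : ∀ i ≠ j, N i i = 1) : N = coordReflection j := by
  have hoff : ∀ k i, k ≠ i → N k i = 0 := by
    intro k i hki
    by_cases hi : i = j
    · subst hi
      exact eq_zero_of_sum_sq_eq_one_of_eq_one (sum_sq_apply_left_of_mem_orthogonalGroup hN k)
        (hdiag k hki) (Ne.symm hki)
    · exact eq_zero_of_sum_sq_eq_one_of_eq_one (sum_sq_apply_right_of_mem_orthogonalGroup hN i)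
        (hdiag i hi) hki
  have hN_diag : N = diagonal (fun i => N i i) := by
    ext k i
    by_cases hki : k = i
    · simp [hki]
    · simp [hki, hoff k i hki]
  have hj : N j j = -1 := by
    have hdet_diag : N.det = ∏ i, N i i := by
      conv_lhs => rw [hN_diag]
      exact det_diagonal
    rwa [hdet_diag, Finset.prod_eq_single j (fun i _ hi => hdiag i hi) (by simp)] at hdet
  rw [hN_diag, coordReflection]
  congr 1
  ext i
  by_cases h : i = j
  · simp [h, hj]
  · simp [h, hdiag i h]

lemma exists_mulVec_eq_neg_self_of_det_eq_neg_one (hN : N ∈ orthogonalGroup ι ℝ)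
    (hdet : N.det = -1) : ∃ v ≠ 0, N *ᵥ v = -v := by
  have hdet_add : (N + 1).det = 0 := by
    have h : N + 1 = N * (N + 1)ᵀ := by
      rw [transpose_add, transpose_one, mul_add, mul_transpose_self_of_mem_orthogonalGroup hN,
        mul_one, add_comm]
    have : (N + 1).det = -(N + 1).det := by
      conv_lhs => rw [h, det_mul, det_transpose, hdet]
      ring
    linarith
  obtain ⟨v, hv, hv0⟩ := exists_mulVec_eq_zero_iff.mpr hdet_add
  exact ⟨v, hv, by rwa [add_mulVec, one_mulVec, add_eq_zero_iff_eq_neg] at hv0⟩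

lemma trace_le_card_sub_two_of_det_eq_neg_one (hN : N ∈ orthogonalGroup ι ℝ)
    (hdet : N.det = -1) : N.trace ≤ Fintype.card ι - 2 := by
  obtain ⟨v, hv, hNv⟩ := exists_mulVec_eq_neg_self_of_det_eq_neg_one hN hdet
  -- `‖1 - N‖_F ^ 2 = 2 (n - tr N)` is at least the square `4` of the eigenvalue `2` of `1 - N`
  have hv2 : (1 - N) *ᵥ v = (2 : ℝ) • v := by
    rw [sub_mulVec, one_mulVec, hNv, two_smul, sub_neg_eq_add]
  have htrace : ((1 - N) * (1 - N)ᵀ).trace = 2 * (Fintype.card ι - N.trace) := by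
    rw [transpose_sub, transpose_one, sub_mul, mul_sub, mul_sub, mul_one, one_mul, mul_one,
      mul_transpose_self_of_mem_orthogonalGroup hN]
    simp only [trace_sub, trace_one, trace_transpose]
    ring
  have hvv : 0 < v ⬝ᵥ v :=
    (Finset.sum_nonneg fun i _ => mul_self_nonneg (v i)).lt_of_ne'
      (dotProduct_self_eq_zero.not.mpr hv)
  have := mulVec_dotProduct_mulVec_le (1 - N) v
  rw [hv2, htrace, smul_dotProduct, dotProduct_smul, smul_eq_mul, smul_eq_mul] at this
  nlinarith

end Orthogonal

lemma trace_coordReflection_mul_diagonal_sub (N : Matrix ι ι ℝ) (μ : ι → ℝ) (j : ι) :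
    (coordReflection j * diagonal μ).trace - (N * diagonal μ).trace =
      ∑ i, (1 - N i i) * (μ i - μ j) + μ j * (Fintype.card ι - 2 - N.trace) := by
  rw [trace_coordReflection_mul_diagonal]
  simp only [trace, diag, mul_diagonal, sub_mul, one_mul, mul_sub, Finset.sum_sub_distrib,
    ← Finset.sum_mul, Finset.sum_const, Finset.card_univ, nsmul_eq_mul]
  ring

section DiagonalProblem

variable {N : Matrix ι ι ℝ} {μ : ι → ℝ} {j : ι}

lemma trace_mul_diagonal_le (hN : N ∈ orthogonalGroup ι ℝ) (hdet : N.det = -1)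
    (hμ : ∀ i, μ j ≤ μ i) (hμj : 0 ≤ μ j) :
    (N * diagonal μ).trace ≤ (coordReflection j * diagonal μ).trace := by
  have hsum : 0 ≤ ∑ i, (1 - N i i) * (μ i - μ j) := Finset.sum_nonneg fun i _ =>
    mul_nonneg (sub_nonneg.mpr (apply_le_one_of_mem_orthogonalGroup hN i i))
      (sub_nonneg.mpr (hμ i))
  have htrace := trace_le_card_sub_two_of_det_eq_neg_one hN hdet
  have := trace_coordReflection_mul_diagonal_sub N μ j
  nlinarith

lemma eq_coordReflection_of_trace_mul_diagonal_le (hN : N ∈ orthogonalGroup ι ℝ)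
    (hdet : N.det = -1) (hμ : ∀ i ≠ j, μ j < μ i) (hμj : 0 ≤ μ j)
    (hle : (coordReflection j * diagonal μ).trace ≤ (N * diagonal μ).trace) :
    N = coordReflection j := by
  have hμle (i : ι) : μ j ≤ μ i := by
    rcases eq_or_ne i j with rfl | hi
    exacts [le_rfl, (hμ i hi).le]
  have hterm : ∀ i ∈ Finset.univ, 0 ≤ (1 - N i i) * (μ i - μ j) := fun i _ =>
    mul_nonneg (sub_nonneg.mpr (apply_le_one_of_mem_orthogonalGroup hN i i))
      (sub_nonneg.mpr (hμle i))
  have hsum : ∑ i, (1 - N i i) * (μ i - μ j) = 0 := by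
    have htrace := trace_le_card_sub_two_of_det_eq_neg_one hN hdet
    have := trace_coordReflection_mul_diagonal_sub N μ j
    have := Finset.sum_nonneg hterm
    nlinarith
  refine eq_coordReflection_of_diag_eq_one hN hdet fun i hi => ?_
  have := (Finset.sum_eq_zero_iff_of_nonneg hterm).mp hsum i (Finset.mem_univ i)
  rcases mul_eq_zero.mp this with h | h
  · linarith
  · linarith [hμ i hi]

end DiagonalProblem

lemma exists_mem_orthogonalGroup_mul_diagonal_eq {A : Matrix ι ι ℝ} {μ : ι → ℝ}
    (hA : Aᵀ * A = diagonal μ * diagonal μ) :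
    ∃ W ∈ orthogonalGroup ι ℝ, W * diagonal μ = A := by
  have hcol : ∀ i l, ∑ k, A k i * A k l = if i = l then μ i * μ l else 0 := fun i l => by
    simpa [mul_apply, diagonal_mul_diagonal, diagonal_apply] using congrFun (congrFun hA i) l
  let w : ι → EuclideanSpace ℝ ι := fun i => (μ i)⁻¹ • WithLp.toLp 2 (fun k => A k i)
  have hw : Orthonormal ℝ ({i | μ i ≠ 0}.domRestrict w) := by
    rw [orthonormal_iff_ite]
    rintro ⟨i, hi⟩ ⟨l, hl⟩
    simp only [Set.domRestrict_apply, w, real_inner_smul_left, real_inner_smul_right,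
      EuclideanSpace.inner_toLp_toLp, star_trivial]
    rw [dotProduct_comm]
    simp only [dotProduct, hcol, Subtype.mk.injEq]
    split_ifs with h
    · subst h
      field_simp [hi.out]
    · simp
  obtain ⟨b, hb⟩ := hw.exists_orthonormalBasis_extension_of_card_eq (by simp)
  refine ⟨(EuclideanSpace.basisFun ι ℝ).toBasis.toMatrix b,
    (EuclideanSpace.basisFun ι ℝ).toMatrix_orthonormalBasis_mem_orthogonal b, ?_⟩
  ext k i
  rw [mul_diagonal, Basis.toMatrix_apply]
  by_cases hi : μ i = 0
  · have : ∑ k, A k i * A k i = 0 := by simpa [hi] using hcol i i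
    rw [hi, mul_zero, eq_comm]
    exact mul_self_eq_zero.mp ((Finset.sum_eq_zero_iff_of_nonneg fun k _ =>
      mul_self_nonneg (A k i)).mp this k (Finset.mem_univ k))
  · rw [hb i hi]
    simp only [OrthonormalBasis.coe_toBasis_repr_apply, EuclideanSpace.basisFun_repr, w,
      PiLp.smul_apply, smul_eq_mul]
    field_simp

lemma exists_mem_orthogonalGroup_eq_mul_diagonal_mul_transpose_of_det_nonpos
    {B V : Matrix ι ι ℝ} {μ : ι → ℝ} (hV : V ∈ orthogonalGroup ι ℝ) (hμ : ∀ i, 0 ≤ μ i)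
    (hBV : (B * V)ᵀ * (B * V) = diagonal μ * diagonal μ) (hB : B.det ≤ 0) :
    ∃ W ∈ orthogonalGroup ι ℝ, W.det * V.det = -1 ∧ B = W * diagonal μ * Vᵀ := by
  obtain ⟨W, hW, hWμ⟩ := exists_mem_orthogonalGroup_mul_diagonal_eq hBV
  have hBW : B = W * diagonal μ * Vᵀ := by
    rw [hWμ, Matrix.mul_assoc, mul_transpose_self_of_mem_orthogonalGroup hV, Matrix.mul_one]
  have hdetV := det_mul_self_of_mem_orthogonalGroup hV
  have hdetW := det_mul_self_of_mem_orthogonalGroup hW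
  have hsign : W.det * V.det = 1 ∨ W.det * V.det = -1 :=
    mul_self_eq_one_iff.mp (by linear_combination V.det * V.det * hdetW + hdetV)
  rcases hsign with hsign | hsign
  · have hdetB : B.det = ∏ i, μ i := by
      rw [hBW, det_mul, det_mul, det_transpose, det_diagonal]
      linear_combination (∏ i, μ i) * hsign
    obtain ⟨j, -, hj⟩ := Finset.prod_eq_zero_iff.mp
      (le_antisymm (hdetB ▸ hB) (Finset.prod_nonneg fun i _ => hμ i))
    refine ⟨W * coordReflection j, mul_mem hW (coordReflection_mem_orthogonalGroup j), ?_, ?_⟩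
    · rw [det_mul, det_coordReflection]
      linear_combination -hsign
    · rw [hBW, Matrix.mul_assoc W (coordReflection j), coordReflection_mul_diagonal_of_eq_zero j hj]
  · exact ⟨W, hW, hsign, hBW⟩

theorem existsUnique_maximizer_trace_transpose_mul {B V W : Matrix ι ι ℝ} {μ : ι → ℝ} {j : ι}
    (hV : V ∈ orthogonalGroup ι ℝ) (hW : W ∈ orthogonalGroup ι ℝ) (hWV : W.det * V.det = -1)
    (hB : B = W * diagonal μ * Vᵀ) (hμj : 0 ≤ μ j) (hμ : ∀ i ≠ j, μ j < μ i) :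
    ∃! Q : Matrix ι ι ℝ, (Qᵀ * Q = 1 ∧ Q.det = 1) ∧
      ∀ Q' : Matrix ι ι ℝ, Q'ᵀ * Q' = 1 → Q'.det = 1 →
        (Q'ᵀ * B).trace ≤ (Qᵀ * B).trace := by
  have htrace (Q : Matrix ι ι ℝ) : (Qᵀ * B).trace = (Vᵀ * Qᵀ * W * diagonal μ).trace := by
    rw [hB, ← Matrix.mul_assoc, ← Matrix.mul_assoc, trace_mul_comm, ← Matrix.mul_assoc,
      ← Matrix.mul_assoc]
  have hN {Q : Matrix ι ι ℝ} (hQ : Qᵀ * Q = 1) (hQdet : Q.det = 1) :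
      Vᵀ * Qᵀ * W ∈ orthogonalGroup ι ℝ ∧ (Vᵀ * Qᵀ * W).det = -1 := by
    have hQ' : Q ∈ orthogonalGroup ι ℝ := (mem_orthogonalGroup_iff' ι ℝ).mpr hQ
    refine ⟨mul_mem (mul_mem (transpose_mem_orthogonalGroup hV)
      (transpose_mem_orthogonalGroup hQ')) hW, ?_⟩
    rw [det_mul, det_mul, det_transpose, det_transpose, hQdet]
    linear_combination hWV
  set Q₀ := W * coordReflection j * Vᵀ
  have hQ₀ : Q₀ ∈ orthogonalGroup ι ℝ :=
    mul_mem (mul_mem hW (coordReflection_mem_orthogonalGroup j)) (transpose_mem_orthogonalGroup hV)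
  have hQ₀det : Q₀.det = 1 := by
    rw [det_mul, det_mul, det_transpose, det_coordReflection]
    linear_combination -hWV
  have hN₀ : Vᵀ * Q₀ᵀ * W = coordReflection j := by
    simp only [Q₀, transpose_mul, transpose_transpose, transpose_coordReflection, Matrix.mul_assoc,
      transpose_mul_self_of_mem_orthogonalGroup hW, Matrix.mul_one]
    rw [← Matrix.mul_assoc, transpose_mul_self_of_mem_orthogonalGroup hV, Matrix.one_mul]
  refine ⟨Q₀, ⟨⟨transpose_mul_self_of_mem_orthogonalGroup hQ₀, hQ₀det⟩, fun Q hQ hQdet => ?_⟩, ?_⟩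
  · rw [htrace, htrace, hN₀]
    refine trace_mul_diagonal_le (hN hQ hQdet).1 (hN hQ hQdet).2 (fun i => ?_) hμj
    rcases eq_or_ne i j with rfl | hi
    exacts [le_rfl, (hμ i hi).le]
  · rintro Q ⟨⟨hQ, hQdet⟩, hmax⟩
    have hle := hmax Q₀ (transpose_mul_self_of_mem_orthogonalGroup hQ₀) hQ₀det
    rw [htrace, htrace, hN₀] at hle
    have hNQ :=
      eq_coordReflection_of_trace_mul_diagonal_le (hN hQ hQdet).1 (hN hQ hQdet).2 hμ hμj hle
    have hcancel (X : Matrix ι ι ℝ) : V * (Vᵀ * X * W) * Wᵀ = X := by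
      simp only [← Matrix.mul_assoc, mul_transpose_self_of_mem_orthogonalGroup hV, Matrix.one_mul]
      rw [Matrix.mul_assoc, mul_transpose_self_of_mem_orthogonalGroup hW, Matrix.mul_one]
    rw [← transpose_inj, ← hcancel Qᵀ, ← hcancel Q₀ᵀ, hNQ, hN₀]

end Matrix

namespace Matrix.IsHermitian

variable {ι : Type*} [Fintype ι] [DecidableEq ι] {A : Matrix ι ι ℝ} (hA : A.IsHermitian)

lemma eq_eigenvectorUnitary_mul_diagonal_mul_transpose :
    A = (hA.eigenvectorUnitary : Matrix ι ι ℝ) * diagonal hA.eigenvalues *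
      (hA.eigenvectorUnitary : Matrix ι ι ℝ)ᵀ := by
  conv_lhs => rw [hA.spectral_theorem]
  simp only [RCLike.ofReal_real_eq_id, CompTriple.comp_eq, Unitary.conjStarAlgAut_apply]
  rfl

lemma exists_eigenvalues_eq {v : ι → ℝ} {c : ℝ} (hv : v ≠ 0) (h : A *ᵥ v = c • v) :
    ∃ i, hA.eigenvalues i = c := by
  have hc : Module.End.HasEigenvalue (toLin' A) c :=
    Module.End.hasEigenvalue_of_hasEigenvector ⟨Module.End.mem_eigenspace_iff.mpr h, hv⟩
  have := spectrum_toLin' A ▸ hc.mem_spectrum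
  rwa [hA.spectrum_real_eq_range_eigenvalues] at this

lemma card_eigenvalues_eq_le_finrank_ker (c : ℝ) :
    Fintype.card {i // hA.eigenvalues i = c} ≤
      finrank ℝ (LinearMap.ker (A - c • (1 : Matrix ι ι ℝ)).mulVecLin) := by
  set K := LinearMap.ker (A - c • (1 : Matrix ι ι ℝ)).mulVecLin
  have hmem (i : {i // hA.eigenvalues i = c}) : WithLp.ofLp (hA.eigenvectorBasis i) ∈ K := by
    rw [LinearMap.mem_ker, mulVecLin_apply, sub_mulVec, smul_mulVec, one_mulVec,
      hA.mulVec_eigenvectorBasis, i.2, sub_self]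
  have hli : LinearIndependent ℝ fun i => (⟨_, hmem i⟩ : K) := by
    apply LinearIndependent.of_comp K.subtype
    exact (hA.eigenvectorBasis.orthonormal.linearIndependent.map'
      (WithLp.linearEquiv 2 ℝ (ι → ℝ)).toLinearMap (LinearEquiv.ker _)).comp
      Subtype.val Subtype.val_injective
  exact hli.fintype_card_le_finrank

end Matrix.IsHermitian

/-- Uniqueness part of the paper's Proposition 1 (case `det B ≤ 0`): if the
smallest eigenvalue of `R` (the positive semidefinite square root of `Bᵀ B`)
has multiplicity 1, then there is exactly one maximizer of `Q ↦ trace(Qᵀ B)`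
over `SO(n)`. -/
theorem stmt10 {n : ℕ}
    (B R : Matrix (Fin n) (Fin n) ℝ) (hdet : B.det ≤ 0)
    (hR : R.PosSemidef) (hRR : R * R = Bᵀ * B) (lammin : ℝ)
    (hmin : IsLeast {μ : ℝ | ∃ v : Fin n → ℝ, v ≠ 0 ∧ R.mulVec v = μ • v} lammin)
    (hmult : Module.finrank ℝ
      (LinearMap.ker (R - lammin • (1 : Matrix (Fin n) (Fin n) ℝ)).mulVecLin) = 1) :
    ∃! Q : Matrix (Fin n) (Fin n) ℝ, (Qᵀ * Q = 1 ∧ Q.det = 1) ∧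
      ∀ Q' : Matrix (Fin n) (Fin n) ℝ, Q'ᵀ * Q' = 1 → Q'.det = 1 →
        (Q'ᵀ * B).trace ≤ (Qᵀ * B).trace := by
  have hH := hR.isHermitian
  set μ := hH.eigenvalues
  set V : Matrix (Fin n) (Fin n) ℝ := ↑hH.eigenvectorUnitary
  have hV : V ∈ orthogonalGroup (Fin n) ℝ := hH.eigenvectorUnitary.2
  have hRV : R = V * diagonal μ * Vᵀ := hH.eq_eigenvectorUnitary_mul_diagonal_mul_transpose
  obtain ⟨j, hj⟩ : ∃ j, μ j = lammin :=
    let ⟨_, hv, hRv⟩ := hmin.1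
    hH.exists_eigenvalues_eq hv hRv
  have hlt : ∀ i ≠ j, μ j < μ i := by
    intro i hij
    have hle : lammin ≤ μ i :=
      hmin.2 ⟨_, by simpa using hH.eigenvectorBasis.orthonormal.ne_zero i,
        hH.mulVec_eigenvectorBasis i⟩
    rw [hj]
    refine lt_of_le_of_ne hle fun hi => hij ?_
    have hcard := (hH.card_eigenvalues_eq_le_finrank_ker lammin).trans hmult.le
    exact congrArg Subtype.val (Fintype.card_le_one_iff.mp hcard ⟨i, hi.symm⟩ ⟨j, hj⟩)
  have hBV : (B * V)ᵀ * (B * V) = diagonal μ * diagonal μ := by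
    have hVV (X : Matrix (Fin n) (Fin n) ℝ) : Vᵀ * (V * X) = X := by
      rw [← Matrix.mul_assoc, transpose_mul_self_of_mem_orthogonalGroup hV, Matrix.one_mul]
    rw [transpose_mul, Matrix.mul_assoc, ← Matrix.mul_assoc Bᵀ, ← hRR, hRV]
    simp only [Matrix.mul_assoc, hVV, transpose_mul_self_of_mem_orthogonalGroup hV, Matrix.mul_one]
  obtain ⟨W, hW, hWV, hB⟩ := exists_mem_orthogonalGroup_eq_mul_diagonal_mul_transpose_of_det_nonpos
    hV hR.eigenvalues_nonneg hBV hdet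
  exact existsUnique_maximizer_trace_transpose_mul hV hW hWV hB (hR.eigenvalues_nonneg j) hlt
end

section
/- Let B be a real symmetric positive semidefinite n×n matrix with eigenvalues μ₁ ≥ μ₂ ≥ … ≥ μ_n (with multiplicity), and let 1 ≤ p ≤ n. Then the maximum of trace(Π B) over all rank-p orthogonal projectors Π equals μ₁ + μ₂ + … + μ_p, and a rank-p orthogonal projector Π attains this maximum if and only if there exists an orthogonal matrix H with Hᵀ B H = diag(μ₁, …, μ_n) such that Π = H diag(I_p, 0_{n−p}) Hᵀ; that is, the maximizers are exactly the orthogonal projectors onto dominant p-dimensional eigenspaces of B. -/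
/-!
Conjugating by `H₀` reduces everything to `B = diagonal μ`. For a rank-`p` orthogonal
projector `Q`, the diagonal `d i = Q i i` satisfies `0 ≤ d ≤ 1` and `∑ d = trace Q = p`. With
`c` the indicator of `{i < p}` and `t = μ (p - 1)`,
`∑ d i μ i - ∑ c i μ i = ∑ (d i - c i) (μ i - t)`, and every term is `≤ 0` because `μ` is
antitone. Equality forces `d i = c i` whenever `μ i ≠ t`; a projector whose diagonal entry is
`0` or `1` vanishes elsewhere in that row, so `Q` agrees with `diagonal c` outside the block
`{i | μ i = t}`. On that block `Q` is a projector with the same trace as `diagonal c`, hence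
orthogonally conjugate to it (spectral theorem plus a permutation of the 0/1 eigenvalues); the
conjugating matrix is the identity off the block, so it commutes with `diagonal μ`.
-/

open Matrix

theorem mul_conj_mul_eq_of_mul_eq_one {M : Type*} [Monoid M] {v w : M} (h : w * v = 1)
    (d : M) : w * (v * d * w) * v = d := by
  simp only [← mul_assoc, h, one_mul]
  rw [mul_assoc, h, mul_one]

section ZeroOne

variable {ι : Type*} [Fintype ι]

theorem sum_eq_card_filter_eq_one {f : ι → ℝ} (hf : ∀ i, f i = 0 ∨ f i = 1) :
    ∑ i, f i = (Finset.univ.filter fun i => f i = 1).card := by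
  rw [← Finset.sum_boole]
  refine Finset.sum_congr rfl fun i _ => ?_
  rcases hf i with h | h <;> simp [h]

theorem exists_perm_comp_eq_of_sum_eq {f g : ι → ℝ} (hf : ∀ i, f i = 0 ∨ f i = 1)
    (hg : ∀ i, g i = 0 ∨ g i = 1) (hsum : ∑ i, f i = ∑ i, g i) :
    ∃ σ : Equiv.Perm ι, ∀ i, f (σ i) = g i := by
  have h₁ : Fintype.card {i // g i = 1} = Fintype.card {i // f i = 1} := by
    rw [sum_eq_card_filter_eq_one hf, sum_eq_card_filter_eq_one hg] at hsum
    simp only [Fintype.card_subtype]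
    exact_mod_cast hsum.symm
  have h₀ : Fintype.card {i // ¬g i = 1} = Fintype.card {i // ¬f i = 1} := by
    rw [Fintype.card_subtype_compl, Fintype.card_subtype_compl, h₁]
  refine ⟨Equiv.subtypeCongr (Fintype.equivOfCardEq h₁) (Fintype.equivOfCardEq h₀), fun i => ?_⟩
  by_cases hi : g i = 1
  · simp [Equiv.subtypeCongr, hi, ((Fintype.equivOfCardEq h₁) ⟨i, hi⟩).2]
  · have hfi := ((Fintype.equivOfCardEq h₀) ⟨i, hi⟩).2
    simp only [Equiv.subtypeCongr, Equiv.trans_apply, hi, not_false_eq_true,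
      Equiv.sumCompl_symm_apply_of_neg, Equiv.sumCongr_apply, Sum.map_inr,
      Equiv.sumCompl_apply_inr]
    rw [(hf _).resolve_right hfi, (hg i).resolve_right hi]

end ZeroOne

section Threshold

variable {ι : Type*} [Fintype ι] {c d μ : ι → ℝ} {t : ℝ}

theorem sub_mul_sub_nonpos_of_threshold {c d μ : ℝ} (hc : (c = 1 ∧ t ≤ μ) ∨ (c = 0 ∧ μ ≤ t))
    (hd₀ : 0 ≤ d) (hd₁ : d ≤ 1) : (d - c) * (μ - t) ≤ 0 := by
  rcases hc with ⟨rfl, h⟩ | ⟨rfl, h⟩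
  · exact mul_nonpos_of_nonpos_of_nonneg (by linarith) (by linarith)
  · exact mul_nonpos_of_nonneg_of_nonpos (by linarith) (by linarith)

theorem sum_mul_sub_sum_mul_eq_of_sum_eq (hsum : ∑ i, d i = ∑ i, c i) :
    ∑ i, d i * μ i - ∑ i, c i * μ i = ∑ i, (d i - c i) * (μ i - t) := by
  simp only [sub_mul, mul_sub, Finset.sum_sub_distrib, ← Finset.sum_mul, hsum]
  ring

theorem sum_mul_le_of_threshold (hc : ∀ i, (c i = 1 ∧ t ≤ μ i) ∨ (c i = 0 ∧ μ i ≤ t))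
    (hd₀ : ∀ i, 0 ≤ d i) (hd₁ : ∀ i, d i ≤ 1) (hsum : ∑ i, d i = ∑ i, c i) :
    ∑ i, d i * μ i ≤ ∑ i, c i * μ i := by
  have := Finset.sum_nonpos fun i (_ : i ∈ Finset.univ) =>
    sub_mul_sub_nonpos_of_threshold (hc i) (hd₀ i) (hd₁ i)
  linarith [sum_mul_sub_sum_mul_eq_of_sum_eq (μ := μ) (t := t) hsum]

theorem sub_mul_sub_eq_zero_of_sum_mul_eq (hc : ∀ i, (c i = 1 ∧ t ≤ μ i) ∨ (c i = 0 ∧ μ i ≤ t))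
    (hd₀ : ∀ i, 0 ≤ d i) (hd₁ : ∀ i, d i ≤ 1) (hsum : ∑ i, d i = ∑ i, c i)
    (heq : ∑ i, d i * μ i = ∑ i, c i * μ i) (i : ι) : (d i - c i) * (μ i - t) = 0 := by
  have hzero : ∑ i, (d i - c i) * (μ i - t) = 0 := by
    rw [← sum_mul_sub_sum_mul_eq_of_sum_eq hsum, heq, sub_self]
  exact (Finset.sum_eq_zero_iff_of_nonpos fun i _ =>
    sub_mul_sub_nonpos_of_threshold (hc i) (hd₀ i) (hd₁ i)).mp hzero i (Finset.mem_univ i)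

end Threshold

namespace Matrix

variable {ι : Type*}

theorem submatrix_sumCompl_eq_fromBlocks [DecidableEq ι] {R : Type*} [Zero R]
    {Q : Matrix ι ι R} (S : ι → Prop) [DecidablePred S] {c : ι → R}
    (hoff : ∀ i j, ¬S i ∨ ¬S j → Q i j = diagonal c i j) :
    Q.submatrix (Equiv.sumCompl S) (Equiv.sumCompl S) =
      fromBlocks (Q.submatrix (↑) (↑)) 0 0 (diagonal (c ∘ (↑))) := by
  ext (a | a) (b | b)
  · rfl
  · exact (hoff _ _ (.inr b.2)).trans (diagonal_apply_ne _ fun h => b.2 (h ▸ a.2))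
  · exact (hoff _ _ (.inl a.2)).trans (diagonal_apply_ne _ fun h => a.2 (h ▸ b.2))
  · exact (hoff _ _ (.inl a.2)).trans (by simp [diagonal_apply, Subtype.ext_iff])

variable [Fintype ι]

theorem isStarProjection_iff {P : Matrix ι ι ℝ} :
    IsStarProjection P ↔ Pᵀ = P ∧ P * P = P := by
  rw [isStarProjection_iff', star_eq_conjTranspose, conjTranspose_eq_transpose_of_trivial,
    and_comm]

variable [DecidableEq ι]

theorem isStarProjection_diagonal_iff {e : ι → ℝ} :
    IsStarProjection (diagonal e) ↔ ∀ i, e i = 0 ∨ e i = 1 := by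
  simp only [isStarProjection_iff, diagonal_transpose, diagonal_mul_diagonal, true_and,
    diagonal_eq_diagonal_iff, ← IsIdempotentElem.eq_def, IsIdempotentElem.iff_eq_zero_or_one]

theorem trace_eq_rank_of_mul_self_eq {K : Type*} [Field K] {P : Matrix ι ι K}
    (h : P * P = P) : P.trace = P.rank := by
  have hP : IsIdempotentElem (toLin' P) := by
    rw [IsIdempotentElem, Module.End.mul_eq_comp, ← toLin'_mul, h]
  rw [← trace_toLin'_eq, LinearMap.IsIdempotentElem.isProj_range _ hP |>.trace, rank,
    toLin'_apply']

theorem trace_mul_diagonal {R : Type*} [CommRing R] (M : Matrix ι ι R) (μ : ι → R) :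
    (M * diagonal μ).trace = ∑ i, M i i * μ i := by
  simp [trace, mul_diagonal]

theorem trace_mul_eq_trace_conj_mul_conj {R : Type*} [CommRing R] {H : Matrix ι ι R}
    (hH : H * Hᵀ = 1) (P B : Matrix ι ι R) :
    (P * B).trace = (Hᵀ * P * H * (Hᵀ * B * H)).trace := by
  calc (P * B).trace = (H * Hᵀ * (P * (H * Hᵀ) * B)).trace := by rw [hH, one_mul, mul_one]
    _ = (Hᵀ * (P * (H * Hᵀ) * B) * H).trace := (trace_mul_cycle _ _ _).symm
    _ = (Hᵀ * P * H * (Hᵀ * B * H)).trace := by simp only [mul_assoc]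

theorem trace_conj_diagonal_mul {R : Type*} [CommRing R] {H B : Matrix ι ι R} {μ : ι → R}
    (hH : Hᵀ * H = 1) (hHB : Hᵀ * B * H = diagonal μ) (c : ι → R) :
    (H * diagonal c * Hᵀ * B).trace = ∑ i, c i * μ i := by
  rw [trace_mul_eq_trace_conj_mul_conj (mul_eq_one_comm.mp hH), mul_conj_mul_eq_of_mul_eq_one hH,
    hHB, trace_mul_diagonal]
  simp only [diagonal_apply_eq]

theorem transpose_mul_diagonal_mul_eq_of_eq_one_off_block {R : Type*} [CommRing R]
    {U : Matrix ι ι R} (hU : Uᵀ * U = 1) (S : ι → Prop) {μ : ι → R}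
    (hμ : ∀ i j, S i → S j → μ i = μ j)
    (hoff : ∀ i j, ¬S i ∨ ¬S j → U i j = (1 : Matrix ι ι R) i j) :
    Uᵀ * diagonal μ * U = diagonal μ := by
  have hcomm : diagonal μ * U = U * diagonal μ := by
    ext i j
    rw [diagonal_mul, mul_diagonal]
    by_cases h : S i ∧ S j
    · rw [hμ i j h.1 h.2, mul_comm]
    · rw [hoff i j (not_and_or.mp h), one_apply]
      split_ifs with hij <;> simp [hij]
  rw [mul_assoc, hcomm, ← mul_assoc, hU, one_mul]

end Matrix

namespace IsStarProjection

variable {ι : Type*} [Fintype ι] {Q : Matrix ι ι ℝ}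

theorem diag_eq_sum_sq (hQ : IsStarProjection Q) (i : ι) : Q i i = ∑ j, Q i j ^ 2 := by
  obtain ⟨hQt, hQQ⟩ := isStarProjection_iff.mp hQ
  conv_lhs => rw [← hQQ, mul_apply]
  refine Finset.sum_congr rfl fun j _ => ?_
  rw [sq, ← transpose_apply Q j i, hQt]

theorem diag_nonneg (hQ : IsStarProjection Q) (i : ι) : 0 ≤ Q i i := by
  rw [hQ.diag_eq_sum_sq]
  positivity

theorem diag_le_one (hQ : IsStarProjection Q) (i : ι) : Q i i ≤ 1 := by
  have h : Q i i ^ 2 ≤ Q i i := by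
    conv_rhs => rw [hQ.diag_eq_sum_sq]
    exact Finset.single_le_sum (fun j _ => sq_nonneg (Q i j)) (Finset.mem_univ i)
  nlinarith [hQ.diag_nonneg i]

variable [DecidableEq ι]

theorem apply_eq_zero_of_diag_eq_zero_or_one (hQ : IsStarProjection Q) {i : ι}
    (hi : Q i i = 0 ∨ Q i i = 1) {j : ι} (hji : j ≠ i) : Q i j = 0 := by
  have hsq : Q i i ^ 2 = Q i i := by rcases hi with h | h <;> simp [h]
  have hrest : ∑ k ∈ Finset.univ.erase i, Q i k ^ 2 = 0 := by
    have := hQ.diag_eq_sum_sq i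
    rw [← Finset.add_sum_erase _ _ (Finset.mem_univ i), hsq] at this
    linarith
  rw [Finset.sum_eq_zero_iff_of_nonneg fun k _ => sq_nonneg (Q i k)] at hrest
  exact pow_eq_zero_iff two_ne_zero |>.mp (hrest j (Finset.mem_erase.mpr ⟨hji, Finset.mem_univ j⟩))

theorem conj_of_transpose_mul_self_eq_one (hQ : IsStarProjection Q) {H : Matrix ι ι ℝ}
    (hH : Hᵀ * H = 1) : IsStarProjection (H * Q * Hᵀ) := by
  obtain ⟨hQt, hQQ⟩ := isStarProjection_iff.mp hQ
  refine isStarProjection_iff.mpr ⟨by simp [transpose_mul, hQt, mul_assoc], ?_⟩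
  calc H * Q * Hᵀ * (H * Q * Hᵀ) = H * (Q * (Hᵀ * H) * Q) * Hᵀ := by simp only [mul_assoc]
    _ = H * Q * Hᵀ := by rw [hH, mul_one, hQQ]

theorem transpose_conj (hQ : IsStarProjection Q) {H : Matrix ι ι ℝ} (hH : H * Hᵀ = 1) :
    IsStarProjection (Hᵀ * Q * H) := by
  simpa using hQ.conj_of_transpose_mul_self_eq_one (H := Hᵀ) (by simpa using hH)

theorem trace_transpose_conj_eq_rank (hQ : IsStarProjection Q) {H : Matrix ι ι ℝ}
    (hH : H * Hᵀ = 1) :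
    (Hᵀ * Q * H).trace = Q.rank := by
  rw [trace_mul_cycle, hH, one_mul, trace_eq_rank_of_mul_self_eq hQ.isIdempotentElem.eq]

theorem exists_orthogonal_conj_diagonal_zero_one (hQ : IsStarProjection Q) :
    ∃ (V : Matrix ι ι ℝ) (e : ι → ℝ), Vᵀ * V = 1 ∧ (∀ i, e i = 0 ∨ e i = 1) ∧
      Q = V * diagonal e * Vᵀ := by
  have hH : Q.IsHermitian := hQ.isSelfAdjoint
  obtain ⟨V, e, hV, hspec⟩ : ∃ (V : Matrix ι ι ℝ) (e : ι → ℝ), Vᵀ * V = 1 ∧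
      Q = V * diagonal e * Vᵀ :=
    ⟨hH.eigenvectorUnitary, hH.eigenvalues,
      by simpa [star_eq_conjTranspose] using Unitary.coe_star_mul_self hH.eigenvectorUnitary,
      by simpa [Unitary.conjStarAlgAut_apply, star_eq_conjTranspose] using hH.spectral_theorem⟩
  refine ⟨V, e, hV, isStarProjection_diagonal_iff.mp ?_, hspec⟩
  have hD := hQ.transpose_conj (mul_eq_one_comm.mp hV)
  rwa [hspec, mul_conj_mul_eq_of_mul_eq_one hV] at hD

theorem exists_orthogonal_conj_eq_diagonal_of_trace_eq (hQ : IsStarProjection Q) {c : ι → ℝ}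
    (hc : ∀ i, c i = 0 ∨ c i = 1) (htr : Q.trace = ∑ i, c i) :
    ∃ W : Matrix ι ι ℝ, Wᵀ * W = 1 ∧ Q = W * diagonal c * Wᵀ := by
  obtain ⟨V, e, hV, he, hQV⟩ := hQ.exists_orthogonal_conj_diagonal_zero_one
  have hsum : ∑ i, e i = ∑ i, c i := by
    rw [← htr, hQV, trace_mul_comm, ← mul_assoc, hV, one_mul, trace_diagonal]
  obtain ⟨σ, hσ⟩ := exists_perm_comp_eq_of_sum_eq he hc hsum
  have hce : diagonal c = (diagonal e).submatrix σ σ := by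
    rw [submatrix_diagonal_equiv]
    exact congr_arg diagonal (funext fun i => (hσ i).symm)
  refine ⟨V.submatrix id σ, ?_, ?_⟩
  · rw [transpose_submatrix, ← submatrix_mul _ _ _ _ _ Function.bijective_id, hV,
      submatrix_one_equiv]
  · rw [hce, transpose_submatrix, submatrix_mul_equiv, submatrix_mul_equiv, submatrix_id_id, hQV]

theorem submatrix_of_eq_off_block (hQ : IsStarProjection Q) (S : ι → Prop) [DecidablePred S]
    {c : ι → ℝ} (hoff : ∀ i j, ¬S i ∨ ¬S j → Q i j = diagonal c i j) :
    IsStarProjection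
      (Q.submatrix (Subtype.val : {i // S i} → ι) (Subtype.val : {i // S i} → ι)) := by
  obtain ⟨hQt, hQQ⟩ := isStarProjection_iff.mp hQ
  refine isStarProjection_iff.mpr ⟨by rw [transpose_submatrix, hQt], ?_⟩
  have h := congr_arg
    (fun M => (M.submatrix (Equiv.sumCompl S) (Equiv.sumCompl S)).toBlocks₁₁) hQQ
  simp only [← submatrix_mul_equiv Q Q _ (Equiv.sumCompl S) _,
    submatrix_sumCompl_eq_fromBlocks S hoff, fromBlocks_multiply] at h
  simpa using h

theorem exists_orthogonal_conj_eq_diagonal_of_eq_off_block (hQ : IsStarProjection Q)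
    (S : ι → Prop) [DecidablePred S] {c : ι → ℝ} (hc : ∀ i, c i = 0 ∨ c i = 1)
    (hoff : ∀ i j, ¬S i ∨ ¬S j → Q i j = diagonal c i j) (htr : Q.trace = ∑ i, c i) :
    ∃ U : Matrix ι ι ℝ, Uᵀ * U = 1 ∧ (∀ i j, ¬S i ∨ ¬S j → U i j = (1 : Matrix ι ι ℝ) i j) ∧
      Q = U * diagonal c * Uᵀ := by
  let e := Equiv.sumCompl S
  let A : Matrix {i // S i} {i // S i} ℝ := Q.submatrix (↑) (↑)
  have hD := submatrix_sumCompl_eq_fromBlocks S (Q := diagonal c) fun _ _ _ => rfl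
  rw [submatrix_diagonal _ _ Subtype.val_injective] at hD
  have hQe : Q.submatrix e e = fromBlocks A 0 0 (diagonal (c ∘ (↑))) :=
    submatrix_sumCompl_eq_fromBlocks S hoff
  have hA : IsStarProjection A := hQ.submatrix_of_eq_off_block S hoff
  have hAtr : A.trace = ∑ i : {i // S i}, c i := by
    have hQtr : (Q.submatrix e e).trace = Q.trace := e.sum_comp fun i => Q i i
    rw [← hQtr, hQe, ← Fintype.sum_subtype_add_sum_subtype S c] at htr
    simpa [trace, Fintype.sum_sum_type] using htr
  obtain ⟨W, hW, hAW⟩ :=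
    hA.exists_orthogonal_conj_eq_diagonal_of_trace_eq (c := c ∘ (↑)) (fun i => hc i) hAtr
  let U := (fromBlocks W 0 0 (1 : Matrix {i // ¬S i} {i // ¬S i} ℝ)).submatrix e.symm e.symm
  have hUe : U.submatrix e e = fromBlocks W 0 0 1 := by simp [U]
  refine ⟨U, ?_, ?_, ?_⟩
  · simp [U, transpose_submatrix, submatrix_mul_equiv, fromBlocks_transpose, fromBlocks_multiply,
      hW]
  · intro i j hij
    by_cases hi : S i <;> by_cases hj : S j
    · tauto
    all_goals
      simp only [U, e, submatrix_apply, Equiv.sumCompl_symm_apply_of_pos, hi, hj,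
        Equiv.sumCompl_symm_apply_of_neg, not_false_eq_true, fromBlocks_apply₁₂,
        fromBlocks_apply₂₁, fromBlocks_apply₂₂, Matrix.zero_apply, Matrix.one_apply,
        Subtype.mk.injEq]
    all_goals exact (if_neg (by rintro rfl; contradiction)).symm
  · have h : Q.submatrix e e = (U * diagonal c * Uᵀ).submatrix e e := by
      rw [← submatrix_mul_equiv _ _ _ e, ← submatrix_mul_equiv _ _ _ e, ← transpose_submatrix,
        hUe, hD, hQe, hAW, fromBlocks_transpose, fromBlocks_multiply, fromBlocks_multiply]
      simp
    simpa using congr_arg (submatrix · e.symm e.symm) h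

variable {c μ : ι → ℝ} {t : ℝ}

theorem trace_mul_diagonal_le (hQ : IsStarProjection Q)
    (hc : ∀ i, (c i = 1 ∧ t ≤ μ i) ∨ (c i = 0 ∧ μ i ≤ t)) (htr : Q.trace = ∑ i, c i) :
    (Q * diagonal μ).trace ≤ ∑ i, c i * μ i := by
  rw [trace_mul_diagonal]
  exact sum_mul_le_of_threshold hc hQ.diag_nonneg hQ.diag_le_one htr

theorem exists_orthogonal_of_trace_mul_diagonal_eq (hQ : IsStarProjection Q)
    (hc : ∀ i, (c i = 1 ∧ t ≤ μ i) ∨ (c i = 0 ∧ μ i ≤ t)) (htr : Q.trace = ∑ i, c i)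
    (heq : (Q * diagonal μ).trace = ∑ i, c i * μ i) :
    ∃ U : Matrix ι ι ℝ, Uᵀ * U = 1 ∧ Uᵀ * diagonal μ * U = diagonal μ ∧
      Q = U * diagonal c * Uᵀ := by
  rw [trace_mul_diagonal] at heq
  have hc01 (i : ι) : c i = 0 ∨ c i = 1 := ((hc i).imp And.left And.left).symm
  have hdiag (i : ι) (hi : μ i ≠ t) : Q i i = c i :=
    sub_eq_zero.mp <| (mul_eq_zero.mp <| sub_mul_sub_eq_zero_of_sum_mul_eq hc hQ.diag_nonneg
      hQ.diag_le_one htr heq i).resolve_right (sub_ne_zero.mpr hi)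
  have hrow (i j : ι) (hi : μ i ≠ t) : Q i j = diagonal c i j := by
    rcases eq_or_ne j i with rfl | hji
    · rw [diagonal_apply_eq, hdiag j hi]
    · rw [diagonal_apply_ne _ hji.symm]
      exact hQ.apply_eq_zero_of_diag_eq_zero_or_one (hdiag i hi ▸ hc01 i) hji
  have hoff (i j : ι) : ¬μ i = t ∨ ¬μ j = t → Q i j = diagonal c i j := by
    rintro (hi | hj)
    · exact hrow i j hi
    · rw [← transpose_apply Q, (isStarProjection_iff.mp hQ).1, hrow j i hj,
        ← transpose_apply (diagonal c), diagonal_transpose]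
  obtain ⟨U, hU, hUoff, hQU⟩ :=
    hQ.exists_orthogonal_conj_eq_diagonal_of_eq_off_block (fun i => μ i = t) hc01 hoff htr
  exact ⟨U, hU, transpose_mul_diagonal_mul_eq_of_eq_one_off_block hU _
    (fun i j hi hj => hi.trans hj.symm) hUoff, hQU⟩

end IsStarProjection

section Prefix

variable {n p : ℕ}

def prefixIndicator (n p : ℕ) (i : Fin n) : ℝ := if (i : ℕ) < p then 1 else 0

theorem prefixIndicator_cases_of_antitone (hp : 1 ≤ p) (hpn : p ≤ n) {μ : Fin n → ℝ}
    (hμ : Antitone μ) (i : Fin n) :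
    (prefixIndicator n p i = 1 ∧ μ ⟨p - 1, by omega⟩ ≤ μ i) ∨
      (prefixIndicator n p i = 0 ∧ μ i ≤ μ ⟨p - 1, by omega⟩) := by
  by_cases hi : (i : ℕ) < p
  · exact .inl ⟨if_pos hi, hμ (Fin.le_def.mpr (by simp only; omega))⟩
  · exact .inr ⟨if_neg hi, hμ (Fin.le_def.mpr (by simp only; omega))⟩

theorem isStarProjection_diagonal_prefixIndicator :
    IsStarProjection (diagonal (prefixIndicator n p)) :=
  isStarProjection_diagonal_iff.mpr fun i => by unfold prefixIndicator; split_ifs <;> simp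

theorem sum_prefixIndicator (hpn : p ≤ n) : ∑ i, prefixIndicator n p i = p := by
  simp [prefixIndicator, Finset.sum_boole, Fin.card_filter_val_lt, hpn]

theorem rank_diagonal_prefixIndicator (hpn : p ≤ n) :
    (diagonal (prefixIndicator n p)).rank = p := by
  simp [rank_diagonal, prefixIndicator, Fintype.card_subtype, Fin.card_filter_val_lt, hpn]

theorem sum_prefixIndicator_mul (μ : Fin n → ℝ) :
    ∑ i, prefixIndicator n p i * μ i =
      ∑ i ∈ Finset.univ.filter (fun i : Fin n => (i : ℕ) < p), μ i := by
  simp [prefixIndicator, Finset.sum_filter]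

variable {μ : Fin n → ℝ} {B H₀ P : Matrix (Fin n) (Fin n) ℝ}

theorem trace_mul_le_sum_prefixIndicator_mul (hp : 1 ≤ p) (hpn : p ≤ n) (hμ : Antitone μ)
    (hH₀ : H₀ * H₀ᵀ = 1) (hdiag : H₀ᵀ * B * H₀ = diagonal μ) (hP : IsStarProjection P)
    (hPr : P.rank = p) : (P * B).trace ≤ ∑ i, prefixIndicator n p i * μ i := by
  rw [trace_mul_eq_trace_conj_mul_conj hH₀, hdiag]
  exact (hP.transpose_conj hH₀).trace_mul_diagonal_le (prefixIndicator_cases_of_antitone hp hpn hμ)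
    (by rw [hP.trace_transpose_conj_eq_rank hH₀, hPr, sum_prefixIndicator hpn])

theorem exists_orthogonal_of_trace_mul_eq (hp : 1 ≤ p) (hpn : p ≤ n) (hμ : Antitone μ)
    (hH₀ : H₀ᵀ * H₀ = 1) (hdiag : H₀ᵀ * B * H₀ = diagonal μ) (hP : IsStarProjection P)
    (hPr : P.rank = p) (heq : (P * B).trace = ∑ i, prefixIndicator n p i * μ i) :
    ∃ H : Matrix (Fin n) (Fin n) ℝ, Hᵀ * H = 1 ∧ Hᵀ * B * H = diagonal μ ∧
      P = H * diagonal (prefixIndicator n p) * Hᵀ := by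
  have hH₀' := mul_eq_one_comm.mp hH₀
  rw [trace_mul_eq_trace_conj_mul_conj hH₀', hdiag] at heq
  obtain ⟨U, hU, hUμ, hQU⟩ := (hP.transpose_conj hH₀').exists_orthogonal_of_trace_mul_diagonal_eq
    (prefixIndicator_cases_of_antitone hp hpn hμ)
    (by rw [hP.trace_transpose_conj_eq_rank hH₀', hPr, sum_prefixIndicator hpn]) heq
  refine ⟨H₀ * U, ?_, ?_, ?_⟩
  · rw [transpose_mul, mul_assoc, ← mul_assoc H₀ᵀ, hH₀, one_mul, hU]
  · rw [transpose_mul, ← hUμ, ← hdiag]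
    simp only [mul_assoc]
  · rw [← mul_conj_mul_eq_of_mul_eq_one hH₀' P, hQU, transpose_mul]
    simp only [mul_assoc]

end Prefix

theorem stmt11_general {n p : ℕ} (hp : 1 ≤ p) (hpn : p ≤ n)
    (B : Matrix (Fin n) (Fin n) ℝ)
    (μ : Fin n → ℝ) (hμ : Antitone μ)
    (H₀ : Matrix (Fin n) (Fin n) ℝ) (hH₀ : H₀ᵀ * H₀ = 1)
    (hdiag : H₀ᵀ * B * H₀ = Matrix.diagonal μ) :
    IsGreatest
      {x : ℝ | ∃ P : Matrix (Fin n) (Fin n) ℝ,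
        Pᵀ = P ∧ P * P = P ∧ P.rank = p ∧ x = (P * B).trace}
      (∑ i ∈ Finset.univ.filter (fun i : Fin n => (i : ℕ) < p), μ i)
    ∧ ∀ P : Matrix (Fin n) (Fin n) ℝ, Pᵀ = P → P * P = P → P.rank = p →
        ((P * B).trace = ∑ i ∈ Finset.univ.filter (fun i : Fin n => (i : ℕ) < p), μ i ↔
          ∃ H : Matrix (Fin n) (Fin n) ℝ, Hᵀ * H = 1 ∧ Hᵀ * B * H = Matrix.diagonal μ ∧
            P = H * Matrix.diagonal (fun i : Fin n => if (i : ℕ) < p then (1 : ℝ) else 0) * Hᵀ) := by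
  rw [← sum_prefixIndicator_mul]
  refine ⟨⟨⟨H₀ * diagonal (prefixIndicator n p) * H₀ᵀ, ?_⟩, ?_⟩, fun P hPt hPP hPr => ⟨?_, ?_⟩⟩
  · obtain ⟨hP₀t, hP₀P⟩ := isStarProjection_iff.mp
      (isStarProjection_diagonal_prefixIndicator.conj_of_transpose_mul_self_eq_one hH₀)
    refine ⟨hP₀t, hP₀P, ?_, (trace_conj_diagonal_mul hH₀ hdiag _).symm⟩
    rw [rank_mul_eq_left_of_isUnit_det _ _ (isUnit_det_of_right_inverse hH₀),
      rank_mul_eq_right_of_isUnit_det _ _ (isUnit_det_of_left_inverse hH₀),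
      rank_diagonal_prefixIndicator hpn]
  · rintro x ⟨P, hPt, hPP, hPr, rfl⟩
    exact trace_mul_le_sum_prefixIndicator_mul hp hpn hμ (mul_eq_one_comm.mp hH₀) hdiag
      (isStarProjection_iff.mpr ⟨hPt, hPP⟩) hPr
  · exact exists_orthogonal_of_trace_mul_eq hp hpn hμ hH₀ hdiag
      (isStarProjection_iff.mpr ⟨hPt, hPP⟩) hPr
  · rintro ⟨H, hH, hHB, rfl⟩
    exact trace_conj_diagonal_mul hH hHB _

/-- Paper's Proposition 2 (characterization part): for a symmetric positive
semidefinite `B` with eigenvalues `μ₁ ≥ … ≥ μ_n` (diagonalized by the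
orthogonal matrix `H₀`), the maximum of `trace(Π B)` over rank-`p` orthogonal
projectors is `μ₁ + … + μ_p`, and the maximizers are exactly the orthogonal
projectors onto dominant `p`-dimensional eigenspaces of `B`. -/
theorem stmt11 {n p : ℕ} (hp : 1 ≤ p) (hpn : p ≤ n)
    (B : Matrix (Fin n) (Fin n) ℝ) (hB : B.PosSemidef)
    (μ : Fin n → ℝ) (hμ : Antitone μ)
    (H₀ : Matrix (Fin n) (Fin n) ℝ) (hH₀ : H₀ᵀ * H₀ = 1)
    (hdiag : H₀ᵀ * B * H₀ = Matrix.diagonal μ) :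
    IsGreatest
      {x : ℝ | ∃ P : Matrix (Fin n) (Fin n) ℝ,
        Pᵀ = P ∧ P * P = P ∧ P.rank = p ∧ x = (P * B).trace}
      (∑ i ∈ Finset.univ.filter (fun i : Fin n => (i : ℕ) < p), μ i)
    ∧ ∀ P : Matrix (Fin n) (Fin n) ℝ, Pᵀ = P → P * P = P → P.rank = p →
        ((P * B).trace = ∑ i ∈ Finset.univ.filter (fun i : Fin n => (i : ℕ) < p), μ i ↔
          ∃ H : Matrix (Fin n) (Fin n) ℝ, Hᵀ * H = 1 ∧ Hᵀ * B * H = Matrix.diagonal μ ∧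
            P = H * Matrix.diagonal (fun i : Fin n => if (i : ℕ) < p then (1 : ℝ) else 0) * Hᵀ) :=
  stmt11_general hp hpn B μ hμ H₀ hH₀ hdiag
end

section
/- Let M be a subset of ℝ^m in which every point has the same Euclidean norm r, let x₀ ∈ ℝ^m, and let y* ∈ M satisfy ⟨y*, x₀⟩ ≥ ⟨c, x₀⟩ for all c ∈ M (y* is a maximizer of the linear function c ↦ ⟨c, x₀⟩ on M). Then for every σ > 0, y* is the unique maximizer of c ↦ ⟨c, x₀ + σ y*⟩ on M: for all c ∈ M with c ≠ y*, one has ⟨c, x₀ + σ y*⟩ < ⟨y*, x₀ + σ y*⟩. -/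
open scoped RealInnerProductSpace

/-- 'Property o' from the proof of the paper's Proposition 10: on a set
`M ⊆ ℝ^m` of constant norm `r`, if `y*` maximizes `c ↦ ⟪c, x₀⟫` on `M`, then
for every `σ > 0`, `y*` is the unique maximizer of `c ↦ ⟪c, x₀ + σ y*⟫` on
`M`. -/
theorem stmt15 {m : ℕ}
    (M : Set (EuclideanSpace ℝ (Fin m))) (r : ℝ) (hM : ∀ z ∈ M, ‖z‖ = r)
    (x₀ ystar : EuclideanSpace ℝ (Fin m)) (hys : ystar ∈ M)
    (hmax : ∀ c ∈ M, ⟪c, x₀⟫ ≤ ⟪ystar, x₀⟫)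
    (σ : ℝ) (hσ : 0 < σ) :
    ∀ c ∈ M, c ≠ ystar → ⟪c, x₀ + σ • ystar⟫ < ⟪ystar, x₀ + σ • ystar⟫ := by
  intro c hc hne
  have h1 : ⟪c, x₀⟫ ≤ ⟪ystar, x₀⟫ := hmax c hc
  have hsub : (0:ℝ) < ‖c - ystar‖ ^ 2 := by
    exact pow_pos (norm_pos_iff.mpr (sub_ne_zero.mpr hne)) 2
  have hexp : ‖c - ystar‖ ^ 2 = ‖c‖ ^ 2 - 2 * ⟪c, ystar⟫ + ‖ystar‖ ^ 2 := by
    rw [← real_inner_self_eq_norm_sq, ← real_inner_self_eq_norm_sq,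
      ← real_inner_self_eq_norm_sq, inner_sub_sub_self, real_inner_comm c ystar]
    ring
  have h2 : ⟪c, ystar⟫ < ⟪ystar, ystar⟫ := by
    have hcn := hM c hc
    have hyn := hM ystar hys
    have : ⟪ystar, ystar⟫ = ‖ystar‖ ^ 2 := real_inner_self_eq_norm_sq _
    rw [hcn, hyn] at hexp
    rw [this, hyn]
    linarith
  have h3 : σ * ⟪c, ystar⟫ < σ * ⟪ystar, ystar⟫ := by
    exact (mul_lt_mul_iff_right₀ hσ).mpr h2
  simp only [inner_add_right, real_inner_smul_right]
  linarith
end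

section
/- Let Π_1, …, Π_N be rank-p orthogonal projectors in the real n×n matrices with 1 ≤ p < n, and let C_e = (1/N) Σ_{k=1}^N Π_k. If the function Π ↦ trace(Π C_e) is constant over all rank-p orthogonal projectors Π (i.e., the configuration is balanced on Grass(p,n)), then C_e = (p/n) I_n. -/
/-!
Write `C` for the centroid: it is symmetric with trace `p`. Given coordinates `i ≠ j`, choose a
set `S` of `p - 1` further coordinates. For every vector `u` supported on `{i, j}`, the
projector onto `span(u) ⊕ span(e_s : s ∈ S)` has rank `p`, and its pairing with `C` is
`uᵀCu / uᵀu` plus a term not depending on `u`. Balance therefore makes the Rayleigh quotient of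
`C` constant on `span(e_i, e_j)`: `u = e_i, e_j` gives `C_ii = C_jj`, and `u = e_i ± e_j` gives
`C_ij + C_ji = 0`, hence `C_ij = 0`. So `C` is a multiple of the identity, and its trace fixes the
multiple to `p / n`.
-/

open Matrix

namespace Matrix

variable {K m : Type*} [Field K]

def coordProj [DecidableEq m] (S : Finset m) : Matrix m m K :=
  diagonal fun x => if x ∈ S then 1 else 0

variable [Fintype m]

def IsOrthProjOfRank (p : ℕ) (P : Matrix m m K) : Prop :=
  Pᵀ = P ∧ P * P = P ∧ P.rank = p

theorem trace_eq_rank_of_isIdempotentElem_s18 [DecidableEq m] {A : Matrix m m K}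
    (hA : IsIdempotentElem A) : A.trace = A.rank := by
  have hlin : IsIdempotentElem (toLin' A) := by
    rw [IsIdempotentElem, Module.End.mul_eq_comp, ← toLin'_mul, hA.eq]
  rw [← trace_toLin'_eq, ((LinearMap.isProj_range_iff_isIdempotentElem _).2 hlin).trace, rank,
    toLin'_apply']

theorem isOrthProjOfRank_of_trace [DecidableEq m] [CharZero K] {p : ℕ} {P : Matrix m m K}
    (hsymm : Pᵀ = P) (hidem : IsIdempotentElem P) (htr : P.trace = p) : IsOrthProjOfRank p P :=
  ⟨hsymm, hidem, by exact_mod_cast (trace_eq_rank_of_isIdempotentElem_s18 hidem).symm.trans htr⟩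

noncomputable def lineProj (u : m → K) : Matrix m m K :=
  (u ⬝ᵥ u)⁻¹ • vecMulVec u u

theorem transpose_lineProj (u : m → K) : (lineProj u)ᵀ = lineProj u := by
  rw [lineProj, transpose_smul, transpose_vecMulVec]

theorem isIdempotentElem_lineProj {u : m → K} (hu : u ⬝ᵥ u ≠ 0) :
    IsIdempotentElem (lineProj u) := by
  rw [IsIdempotentElem, lineProj, smul_mul_smul_comm, vecMulVec_mul_vecMulVec, vecMulVec_smul,
    smul_smul, mul_assoc, inv_mul_cancel₀ hu, mul_one]

theorem trace_lineProj {u : m → K} (hu : u ⬝ᵥ u ≠ 0) : (lineProj u).trace = 1 := by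
  rw [lineProj, trace_smul, trace_vecMulVec, smul_eq_mul, inv_mul_cancel₀ hu]

theorem trace_lineProj_mul (u : m → K) (C : Matrix m m K) :
    (lineProj u * C).trace = (u ⬝ᵥ u)⁻¹ * (u ⬝ᵥ C *ᵥ u) := by
  rw [lineProj, smul_mul, trace_smul, vecMulVec_mul, trace_vecMulVec, dotProduct_mulVec,
    dotProduct_comm u (u ᵥ* C), smul_eq_mul]

variable [DecidableEq m]

theorem isIdempotentElem_coordProj (S : Finset m) :
    IsIdempotentElem (coordProj S : Matrix m m K) := by
  rw [IsIdempotentElem, coordProj, diagonal_mul_diagonal]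
  congr 1
  ext x
  split_ifs <;> simp

theorem trace_coordProj (S : Finset m) : (coordProj S : Matrix m m K).trace = S.card := by
  simp [coordProj, trace_diagonal, Finset.sum_ite_mem]

theorem lineProj_mul_coordProj {u : m → K} {S : Finset m} (hu : ∀ s ∈ S, u s = 0) :
    lineProj u * coordProj S = 0 := by
  ext x s
  by_cases hs : s ∈ S <;> simp [lineProj, coordProj, vecMulVec_apply, hs, hu s]

theorem isOrthProjOfRank_lineProj_add_coordProj [CharZero K] {u : m → K} (hu0 : u ⬝ᵥ u ≠ 0)
    {S : Finset m} (hu : ∀ s ∈ S, u s = 0) :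
    IsOrthProjOfRank (S.card + 1) (lineProj u + coordProj S) := by
  have hDt : (coordProj S : Matrix m m K)ᵀ = coordProj S := diagonal_transpose _
  have hLD := lineProj_mul_coordProj hu
  have hDL : coordProj S * lineProj u = 0 := by
    rw [← hDt, ← transpose_lineProj, ← transpose_mul, hLD, transpose_zero]
  refine isOrthProjOfRank_of_trace ?_ ?_ ?_
  · rw [transpose_add, transpose_lineProj, hDt]
  · exact (isIdempotentElem_lineProj hu0).add (isIdempotentElem_coordProj S) (by simp [hLD, hDL])
  · rw [trace_add, trace_coordProj, trace_lineProj hu0]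
    push_cast
    ring

variable [CharZero K] {p : ℕ} {C : Matrix m m K}

theorem trace_lineProj_mul_eq_of_balanced
    (hbal : ∀ P₁ P₂ : Matrix m m K, IsOrthProjOfRank p P₁ → IsOrthProjOfRank p P₂ →
      (P₁ * C).trace = (P₂ * C).trace)
    {S : Finset m} (hS : S.card + 1 = p) {u v : m → K} (hu0 : u ⬝ᵥ u ≠ 0) (hv0 : v ⬝ᵥ v ≠ 0)
    (hu : ∀ s ∈ S, u s = 0) (hv : ∀ s ∈ S, v s = 0) :
    (lineProj u * C).trace = (lineProj v * C).trace := by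
  subst hS
  have := hbal _ _ (isOrthProjOfRank_lineProj_add_coordProj hu0 hu)
    (isOrthProjOfRank_lineProj_add_coordProj hv0 hv)
  rwa [add_mul, add_mul, trace_add, trace_add, add_left_inj] at this

theorem diag_eq_and_add_eq_zero_of_balanced (hp : 1 ≤ p) (hpm : p < Fintype.card m)
    (hbal : ∀ P₁ P₂ : Matrix m m K, IsOrthProjOfRank p P₁ → IsOrthProjOfRank p P₂ →
      (P₁ * C).trace = (P₂ * C).trace)
    {i j : m} (hij : i ≠ j) : C i i = C j j ∧ C i j + C j i = 0 := by
  have hcard : p - 1 ≤ (Finset.univ \ {i, j} : Finset m).card := by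
    rw [Finset.card_sdiff_of_subset (Finset.subset_univ _), Finset.card_univ, Finset.card_pair hij]
    omega
  obtain ⟨S, hSij, hS⟩ := Finset.exists_subset_card_eq hcard
  have hout : ∀ s ∈ S, s ≠ i ∧ s ≠ j := fun s hs => by simpa using hSij hs
  have key := fun {u v : m → K} =>
    trace_lineProj_mul_eq_of_balanced hbal (S := S) (by omega) (u := u) (v := v)
  constructor
  · have hdiag := key (u := Pi.single i 1) (v := Pi.single j 1) (by simp) (by simp)
      (fun s hs => by simp [(hout s hs).1]) (fun s hs => by simp [(hout s hs).2])
    simpa [trace_lineProj_mul] using hdiag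
  · have hpm := key (u := Pi.single i 1 + Pi.single j 1) (v := Pi.single i 1 - Pi.single j 1)
      (by simp [hij]) (by simp [hij]) (fun s hs => by simp [hout s hs])
      (fun s hs => by simp [hout s hs])
    simp [trace_lineProj_mul, hij, mulVec_add, mulVec_sub] at hpm
    linear_combination hpm / 2

theorem eq_trace_div_card_smul_one (hdiag : ∀ i j, i ≠ j → C i i = C j j)
    (hoff : ∀ i j, i ≠ j → C i j = 0) : C = (C.trace / Fintype.card m) • 1 := by
  ext i j
  have hdiag_i : ∀ k, C k k = C i i := fun k => by
    rcases eq_or_ne k i with rfl | hki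
    · rfl
    · exact hdiag k i hki
  have htr : C.trace = Fintype.card m * C i i := by
    simp [trace, hdiag_i]
  have hcard : (Fintype.card m : K) ≠ 0 := Nat.cast_ne_zero.2 (Fintype.card_pos_iff.2 ⟨i⟩).ne'
  rcases eq_or_ne i j with rfl | hij
  · simp [htr, hcard]
  · simp [hij, hoff i j hij]

end Matrix

/-- The paper's claim in Section 4.1: if a configuration of rank-`p`
orthogonal projectors `Π_1, …, Π_N` is balanced on `Grass(p,n)` (the linear
function `Π ↦ trace(Π C_e)` is constant over all rank-`p` orthogonal
projectors), then the centroid `C_e = (1/N) Σ_k Π_k` equals `(p/n) I_n`. -/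
theorem stmt18 {n p N : ℕ} (hp : 1 ≤ p) (hpn : p < n) (hN : 0 < N)
    (P : Fin N → Matrix (Fin n) (Fin n) ℝ)
    (hproj : ∀ k, (P k)ᵀ = P k ∧ P k * P k = P k ∧ (P k).rank = p)
    (Ce : Matrix (Fin n) (Fin n) ℝ) (hCe : Ce = (1 / (N : ℝ)) • ∑ k, P k)
    (hbal : ∀ P₁ P₂ : Matrix (Fin n) (Fin n) ℝ,
      (P₁ᵀ = P₁ ∧ P₁ * P₁ = P₁ ∧ P₁.rank = p) →
      (P₂ᵀ = P₂ ∧ P₂ * P₂ = P₂ ∧ P₂.rank = p) →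
      (P₁ * Ce).trace = (P₂ * Ce).trace) :
    Ce = ((p : ℝ) / (n : ℝ)) • (1 : Matrix (Fin n) (Fin n) ℝ) := by
  have hsymm : Ceᵀ = Ce := by
    rw [hCe, transpose_smul, transpose_sum]
    simp only [(hproj _).1]
  have htr : Ce.trace = p := by
    rw [hCe, trace_smul, trace_sum]
    simp only [trace_eq_rank_of_isIdempotentElem_s18 (hproj _).2.1, (hproj _).2.2, Finset.sum_const,
      Finset.card_univ, Fintype.card_fin, nsmul_eq_mul, smul_eq_mul]
    field_simp
  have hentries := fun {i j : Fin n} (hij : i ≠ j) =>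
    diag_eq_and_add_eq_zero_of_balanced hp (by simpa using hpn) hbal hij
  have hoff : ∀ i j, i ≠ j → Ce i j = 0 := fun i j hij => by
    have hji : Ce j i = Ce i j := congrFun (congrFun hsymm i) j
    linarith [(hentries hij).2]
  rw [eq_trace_div_card_smul_one (fun i j hij => (hentries hij).1) hoff, htr, Fintype.card_fin]
end
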